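/- arXiv:1211.3222 — 9 statements merged into one kernel-verified Lean document; each statement's English description precedes it below -/
import Mathlib

section
/- If E is a nonempty closed set in R^n and for each x in E there exists a d-plane P_x through x with normalized Hausdorff distance d_{x,1}(E,P_x) ≤ ε, then for any x, y in E with |x−y| ≤ 1/2 one has d_{x,1/4}(P_x,P_y) ≤ 8ε. Here d_{x,r}(A,B) = (1/r)[sup_{a∈A∩B(x,r)} dist(a,B) + sup_{b∈B∩B(x,r)} dist(b,A)]. -/
open Metric Set

/-- The normalized local Hausdorff distance
`d_{x,r}(A,B) = (1/r)[sup_{a∈A∩B(x,r)} dist(a,B) + sup_{b∈B∩B(x,r)} dist(b,A)]`. -/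
noncomputable def locDist {n : ℕ} (x : EuclideanSpace ℝ (Fin n)) (r : ℝ)
    (A B : Set (EuclideanSpace ℝ (Fin n))) : ℝ :=
  r⁻¹ * sSup ((fun y => Metric.infDist y B) '' (A ∩ Metric.closedBall x r))
    + r⁻¹ * sSup ((fun y => Metric.infDist y A) '' (B ∩ Metric.closedBall x r))

/-- If `E` is a nonempty closed set in `ℝⁿ` and for each `x ∈ E` there is a `d`-plane `P x`
through `x` with `d_{x,1}(E, P x) ≤ ε`, then for `x, y ∈ E` with `|x - y| ≤ 1/2` one has
`d_{x,1/4}(P x, P y) ≤ 8 ε`. -/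
theorem stmt0 (n d : ℕ) (hd : 0 < d) (hdn : d < n) (ε : ℝ) (hε : 0 ≤ ε)
    (E : Set (EuclideanSpace ℝ (Fin n))) (hEne : E.Nonempty) (hEcl : IsClosed E)
    (P : EuclideanSpace ℝ (Fin n) → AffineSubspace ℝ (EuclideanSpace ℝ (Fin n)))
    (hmem : ∀ x ∈ E, x ∈ P x)
    (hrank : ∀ x ∈ E, Module.finrank ℝ (P x).direction = d)
    (hclose : ∀ x ∈ E, locDist x 1 E (P x) ≤ ε) :
    ∀ x ∈ E, ∀ y ∈ E, dist x y ≤ 1 / 2 →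
      locDist x (1 / 4) (P x : Set (EuclideanSpace ℝ (Fin n))) (P y) ≤ 8 * ε := by
  intro x hx y hy hxy
  have hPx : x ∈ (P x : Set (EuclideanSpace ℝ (Fin n))) := hmem x hx
  have hPy : y ∈ (P y : Set (EuclideanSpace ℝ (Fin n))) := hmem y hy
  set A1 : Set ℝ := (fun w => Metric.infDist w (P x : Set (EuclideanSpace ℝ (Fin n)))) ''
      (E ∩ Metric.closedBall x 1) with hA1def
  set A2 : Set ℝ := (fun w => Metric.infDist w E) ''
      ((P x : Set (EuclideanSpace ℝ (Fin n))) ∩ Metric.closedBall x 1) with hA2def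
  set B1 : Set ℝ := (fun w => Metric.infDist w (P y : Set (EuclideanSpace ℝ (Fin n)))) ''
      (E ∩ Metric.closedBall y 1) with hB1def
  set B2 : Set ℝ := (fun w => Metric.infDist w E) ''
      ((P y : Set (EuclideanSpace ℝ (Fin n))) ∩ Metric.closedBall y 1) with hB2def
  -- boundedness of the four sets
  have hA1bdd : BddAbove A1 := by
    refine ⟨1, ?_⟩
    rintro r ⟨w, ⟨_, hw2⟩, rfl⟩
    exact le_trans (Metric.infDist_le_dist_of_mem hPx) (Metric.mem_closedBall.mp hw2)
  have hA2bdd : BddAbove A2 := by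
    refine ⟨1, ?_⟩
    rintro r ⟨w, ⟨_, hw2⟩, rfl⟩
    exact le_trans (Metric.infDist_le_dist_of_mem hx) (Metric.mem_closedBall.mp hw2)
  have hB1bdd : BddAbove B1 := by
    refine ⟨1, ?_⟩
    rintro r ⟨w, ⟨_, hw2⟩, rfl⟩
    exact le_trans (Metric.infDist_le_dist_of_mem hPy) (Metric.mem_closedBall.mp hw2)
  have hB2bdd : BddAbove B2 := by
    refine ⟨1, ?_⟩
    rintro r ⟨w, ⟨_, hw2⟩, rfl⟩
    exact le_trans (Metric.infDist_le_dist_of_mem hy) (Metric.mem_closedBall.mp hw2)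
  -- nonnegativity of the sups
  have hsupnn : ∀ S : Set ℝ, (∀ r ∈ S, 0 ≤ r) → 0 ≤ sSup S := fun S h => Real.sSup_nonneg h
  have hA1nn : 0 ≤ sSup A1 := hsupnn _ (by rintro r ⟨w, _, rfl⟩; exact Metric.infDist_nonneg)
  have hA2nn : 0 ≤ sSup A2 := hsupnn _ (by rintro r ⟨w, _, rfl⟩; exact Metric.infDist_nonneg)
  have hB1nn : 0 ≤ sSup B1 := hsupnn _ (by rintro r ⟨w, _, rfl⟩; exact Metric.infDist_nonneg)
  have hB2nn : 0 ≤ sSup B2 := hsupnn _ (by rintro r ⟨w, _, rfl⟩; exact Metric.infDist_nonneg)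
  -- the hypotheses at x and y
  have hclx : sSup A1 + sSup A2 ≤ ε := by
    have := hclose x hx
    simpa [locDist, hA1def, hA2def] using this
  have hcly : sSup B1 + sSup B2 ≤ ε := by
    have := hclose y hy
    simpa [locDist, hB1def, hB2def] using this
  -- first half: points of P x near x are close to P y
  have key1 : ∀ z ∈ (P x : Set (EuclideanSpace ℝ (Fin n))) ∩ Metric.closedBall x (1/4),
      Metric.infDist z (P y : Set (EuclideanSpace ℝ (Fin n))) ≤ sSup A2 + sSup B1 := by
    rintro z ⟨hz1, hz2⟩
    have hzx : dist z x ≤ 1/4 := Metric.mem_closedBall.mp hz2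
    obtain ⟨e, he, hedist⟩ := hEcl.exists_infDist_eq_dist hEne z
    have hze : dist z e ≤ 1/4 := by
      rw [← hedist]
      exact le_trans (Metric.infDist_le_dist_of_mem hx) hzx
    have hey : dist e y ≤ 1 := by
      have h1 : dist e y ≤ dist e z + dist z x + dist x y := by
        calc dist e y ≤ dist e z + dist z y := dist_triangle e z y
        _ ≤ dist e z + (dist z x + dist x y) := by
              exact add_le_add_right (dist_triangle z x y) _
        _ = dist e z + dist z x + dist x y := by ring
      rw [dist_comm e z] at h1
      linarith
    have h2 : Metric.infDist z (P y : Set (EuclideanSpace ℝ (Fin n)))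
        ≤ Metric.infDist e (P y : Set (EuclideanSpace ℝ (Fin n))) + dist z e :=
      Metric.infDist_le_infDist_add_dist
    have h3 : dist z e ≤ sSup A2 := by
      rw [← hedist]
      refine le_csSup hA2bdd ⟨z, ⟨hz1, ?_⟩, rfl⟩
      exact Metric.mem_closedBall.mpr (by linarith)
    have h4 : Metric.infDist e (P y : Set (EuclideanSpace ℝ (Fin n))) ≤ sSup B1 :=
      le_csSup hB1bdd ⟨e, ⟨he, Metric.mem_closedBall.mpr hey⟩, rfl⟩
    linarith
  -- second half: points of P y near x are close to P x
  have key2 : ∀ w ∈ (P y : Set (EuclideanSpace ℝ (Fin n))) ∩ Metric.closedBall x (1/4),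
      Metric.infDist w (P x : Set (EuclideanSpace ℝ (Fin n))) ≤ sSup B2 + sSup A1 := by
    rintro w ⟨hw1, hw2⟩
    have hwx : dist w x ≤ 1/4 := Metric.mem_closedBall.mp hw2
    have hwy : dist w y ≤ 1 := by
      have := dist_triangle w x y
      linarith
    obtain ⟨e, he, hedist⟩ := hEcl.exists_infDist_eq_dist hEne w
    have hwe : dist w e ≤ 1/4 := by
      rw [← hedist]
      exact le_trans (Metric.infDist_le_dist_of_mem hx) hwx
    have hex : dist e x ≤ 1 := by
      have := dist_triangle e w x
      rw [dist_comm e w] at this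
      linarith
    have h2 : Metric.infDist w (P x : Set (EuclideanSpace ℝ (Fin n)))
        ≤ Metric.infDist e (P x : Set (EuclideanSpace ℝ (Fin n))) + dist w e :=
      Metric.infDist_le_infDist_add_dist
    have h3 : dist w e ≤ sSup B2 := by
      rw [← hedist]
      exact le_csSup hB2bdd ⟨w, ⟨hw1, Metric.mem_closedBall.mpr hwy⟩, rfl⟩
    have h4 : Metric.infDist e (P x : Set (EuclideanSpace ℝ (Fin n))) ≤ sSup A1 :=
      le_csSup hA1bdd ⟨e, ⟨he, Metric.mem_closedBall.mpr hex⟩, rfl⟩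
    linarith
  -- conclude
  have hT1 : sSup ((fun w => Metric.infDist w (P y : Set (EuclideanSpace ℝ (Fin n)))) ''
      ((P x : Set (EuclideanSpace ℝ (Fin n))) ∩ Metric.closedBall x (1/4))) ≤ sSup A2 + sSup B1 := by
    apply Real.sSup_le
    · rintro r ⟨z, hz, rfl⟩; exact key1 z hz
    · linarith
  have hT2 : sSup ((fun w => Metric.infDist w (P x : Set (EuclideanSpace ℝ (Fin n)))) ''
      ((P y : Set (EuclideanSpace ℝ (Fin n))) ∩ Metric.closedBall x (1/4))) ≤ sSup B2 + sSup A1 := by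
    apply Real.sSup_le
    · rintro r ⟨w, hw, rfl⟩; exact key2 w hw
    · linarith
  rw [locDist]
  have h14 : ((1:ℝ)/4)⁻¹ = 4 := by norm_num
  rw [h14]
  nlinarith [hT1, hT2, hclx, hcly]
end

section
/- Let P and Q be affine d-planes in R^n, both intersecting B(x,1/4), with normalized Hausdorff distance d_{x,1/4}(P,Q) ≤ 10ε, and suppose x ∈ P and x ∈ Q up to distance 10ε/4. Then the orthogonal projections π_P and π_Q onto the parallel vector subspaces of P and Q satisfy ‖π_P − π_Q‖ ≤ 100ε in operator norm. -/
set_option maxHeartbeats 1000000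

open Metric Set

lemma locDist_le_of_mem {n : ℕ} (x : (EuclideanSpace ℝ (Fin n)))
    (A B : Set (EuclideanSpace ℝ (Fin n))) (c : ℝ)
    (hB : (B ∩ Metric.closedBall x (1/4)).Nonempty)
    (h : locDist x (1/4) A B ≤ c) :
    ∀ p ∈ A ∩ Metric.closedBall x (1/4), Metric.infDist p B ≤ c/4 := by
  intro p hp
  have bdd : ∀ (S T : Set (EuclideanSpace ℝ (Fin n))),
      BddAbove ((fun y => infDist y T) '' (S ∩ Metric.closedBall x (1/4))) := by
    intro S T
    refine ⟨infDist x T + 1/4, ?_⟩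
    rintro _ ⟨y, ⟨-, hy⟩, rfl⟩
    have hyx : dist y x ≤ 1/4 := mem_closedBall.1 hy
    have := Metric.infDist_le_infDist_add_dist (x := y) (y := x) (s := T)
    linarith
  have h1 : infDist p B ≤ sSup ((fun y => infDist y B) '' (A ∩ Metric.closedBall x (1/4))) :=
    le_csSup (bdd A B) ⟨p, hp, rfl⟩
  obtain ⟨b, hb⟩ := hB
  have h2 : (0:ℝ) ≤ sSup ((fun y => infDist y A) '' (B ∩ Metric.closedBall x (1/4))) :=
    le_trans Metric.infDist_nonneg (le_csSup (bdd B A) ⟨b, hb, rfl⟩)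
  unfold locDist at h
  norm_num at h
  linarith

/-- If `P, Q` are affine `d`-planes with `d_{x,1/4}(P,Q) ≤ 10ε`, `x ∈ P` and
`dist(x,Q) ≤ 10ε/4`, then the orthogonal projections onto the direction spaces of `P`
and `Q` satisfy `‖π_P − π_Q‖ ≤ 100 ε` in operator norm. -/
theorem stmt1 (n d : ℕ) (hd : 0 < d) (hdn : d < n) (ε : ℝ) (hε : 0 ≤ ε)
    (x : EuclideanSpace ℝ (Fin n))
    (P Q : AffineSubspace ℝ (EuclideanSpace ℝ (Fin n)))
    (hrankP : Module.finrank ℝ P.direction = d)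
    (hrankQ : Module.finrank ℝ Q.direction = d)
    (hxP : x ∈ P)
    (hxQ : Metric.infDist x (Q : Set (EuclideanSpace ℝ (Fin n))) ≤ 10 * ε / 4)
    (hPQ : (P : Set (EuclideanSpace ℝ (Fin n))) ∩ Metric.closedBall x (1 / 4) ≠ ∅)
    (hQB : (Q : Set (EuclideanSpace ℝ (Fin n))) ∩ Metric.closedBall x (1 / 4) ≠ ∅)
    (hclose : locDist x (1 / 4) (P : Set (EuclideanSpace ℝ (Fin n))) (Q : Set (EuclideanSpace ℝ (Fin n))) ≤ 10 * ε) :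
    ‖(P.direction.subtypeL.comp (P.direction.orthogonalProjection) :
        EuclideanSpace ℝ (Fin n) →L[ℝ] EuclideanSpace ℝ (Fin n))
      - Q.direction.subtypeL.comp (Q.direction.orthogonalProjection)‖ ≤ 100 * ε := by
  set A : (EuclideanSpace ℝ (Fin n)) →L[ℝ] EuclideanSpace ℝ (Fin n) := P.direction.subtypeL.comp (P.direction.orthogonalProjection) with hA
  set B : (EuclideanSpace ℝ (Fin n)) →L[ℝ] EuclideanSpace ℝ (Fin n) := Q.direction.subtypeL.comp (Q.direction.orthogonalProjection) with hB
  -- pointwise norm bounds for the projections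
  have hAle : ∀ w : (EuclideanSpace ℝ (Fin n)), ‖A w‖ ≤ ‖w‖ := by
    intro w
    have : ‖(P.direction.orthogonalProjection) w‖ ≤ ‖P.direction.orthogonalProjection‖ * ‖w‖ :=
      (P.direction.orthogonalProjection).le_opNorm w
    have h2 := Submodule.orthogonalProjectionOnto_norm_le P.direction
    have : ‖(P.direction.orthogonalProjection) w‖ ≤ ‖w‖ := by nlinarith [norm_nonneg w]
    simpa [hA] using this
  have hBle : ∀ w : (EuclideanSpace ℝ (Fin n)), ‖B w‖ ≤ ‖w‖ := by
    intro w
    have : ‖(Q.direction.orthogonalProjection) w‖ ≤ ‖Q.direction.orthogonalProjection‖ * ‖w‖ :=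
      (Q.direction.orthogonalProjection).le_opNorm w
    have h2 := Submodule.orthogonalProjectionOnto_norm_le Q.direction
    have : ‖(Q.direction.orthogonalProjection) w‖ ≤ ‖w‖ := by nlinarith [norm_nonneg w]
    simpa [hB] using this
  rcases le_or_gt (1/50 : ℝ) ε with hbig | hsmall
  · -- trivial case : both projections have norm ≤ 1
    have hnA : ‖A‖ ≤ 1 := ContinuousLinearMap.opNorm_le_bound _ zero_le_one
      (fun w => by simpa using hAle w)
    have hnB : ‖B‖ ≤ 1 := ContinuousLinearMap.opNorm_le_bound _ zero_le_one
      (fun w => by simpa using hBle w)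
    calc ‖A - B‖ ≤ ‖A‖ + ‖B‖ := norm_sub_le _ _
      _ ≤ 2 := by linarith
      _ ≤ 100 * ε := by linarith
  -- main case
  have hQne : (Q : Set (EuclideanSpace ℝ (Fin n))).Nonempty := by
    obtain ⟨b, hb, -⟩ := Set.nonempty_iff_ne_empty.2 hQB
    exact ⟨b, hb⟩
  have hPne : (P : Set (EuclideanSpace ℝ (Fin n))).Nonempty := ⟨x, hxP⟩
  have hQcl : IsClosed (Q : Set (EuclideanSpace ℝ (Fin n))) := AffineSubspace.closed_of_finiteDimensional Q
  have hPcl : IsClosed (P : Set (EuclideanSpace ℝ (Fin n))) := AffineSubspace.closed_of_finiteDimensional P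
  have key1 := locDist_le_of_mem x (P : Set (EuclideanSpace ℝ (Fin n))) (Q : Set (EuclideanSpace ℝ (Fin n))) (10*ε)
    (Set.nonempty_iff_ne_empty.2 hQB) hclose
  have key2 : ∀ p ∈ (Q : Set (EuclideanSpace ℝ (Fin n))) ∩ Metric.closedBall x (1/4),
      Metric.infDist p (P : Set (EuclideanSpace ℝ (Fin n))) ≤ (10*ε)/4 := by
    intro p hp
    apply locDist_le_of_mem x (Q : Set (EuclideanSpace ℝ (Fin n))) (P : Set (EuclideanSpace ℝ (Fin n))) (10*ε)
      (Set.nonempty_iff_ne_empty.2 hPQ) _ p hp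
    rw [locDist, add_comm]
    exact hclose
  -- x' : closest point of Q to x
  obtain ⟨x', hx'Q, hx'd⟩ := hQcl.exists_infDist_eq_dist hQne x
  have hxx' : dist x x' ≤ 10*ε/4 := by rw [← hx'd]; exact hxQ
  -- directions of P are 20ε-close to Q.direction
  have hdirP : ∀ u : (EuclideanSpace ℝ (Fin n)), u ∈ P.direction → ‖u - B u‖ ≤ 20*ε*‖u‖ := by
    intro u hu
    rcases eq_or_ne u 0 with rfl | hune
    · simp
    have hn : ‖u‖ ≠ 0 := norm_ne_zero_iff.2 hune
    have hnpos : (0:ℝ) < ‖u‖ := norm_pos_iff.2 hune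
    set p : EuclideanSpace ℝ (Fin n) := (4*‖u‖)⁻¹ • u + x with hp
    have hpP : p ∈ P := by
      have : (4*‖u‖)⁻¹ • u ∈ P.direction := Submodule.smul_mem _ _ hu
      simpa [hp] using AffineSubspace.vadd_mem_of_mem_direction this hxP
    have hpball : p ∈ Metric.closedBall x (1/4) := by
      have : dist p x = (4*‖u‖)⁻¹ * ‖u‖ := by
        rw [hp, dist_eq_norm]
        simp [norm_smul, abs_of_nonneg (by positivity : (0:ℝ) ≤ (4*‖u‖)⁻¹)]
      rw [mem_closedBall, this]
      rw [inv_mul_eq_div]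
      rw [div_le_iff₀ (by positivity)]
      nlinarith
    have hinf : Metric.infDist p (Q : Set (EuclideanSpace ℝ (Fin n))) ≤ 10*ε/4 := by
      have := key1 p ⟨hpP, hpball⟩
      linarith
    obtain ⟨q, hqQ, hqd⟩ := hQcl.exists_infDist_eq_dist hQne p
    have hpq : dist p q ≤ 10*ε/4 := by rw [← hqd]; exact hinf
    set w : EuclideanSpace ℝ (Fin n) := (4*‖u‖) • (q - x') with hw
    have hwQ : w ∈ Q.direction := by
      have : q - x' ∈ Q.direction := by
        simpa using AffineSubspace.vsub_mem_direction hqQ hx'Q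
      exact Submodule.smul_mem _ _ this
    have hkey : u - w = (4*‖u‖) • ((p - q) + (x' - x)) := by
      have hsc : (4*‖u‖) • ((4*‖u‖)⁻¹ • u) = u := by
        rw [smul_smul, mul_inv_cancel₀ (by positivity), one_smul]
      simp only [hw, hp, smul_add, smul_sub, hsc]
      abel
    have huw : ‖u - w‖ ≤ 20*ε*‖u‖ := by
      rw [hkey, norm_smul]
      have h1 : ‖(p - q) + (x' - x)‖ ≤ 5*ε := by
        calc ‖(p - q) + (x' - x)‖ ≤ ‖p - q‖ + ‖x' - x‖ := norm_add_le _ _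
          _ = dist p q + dist x x' := by rw [dist_eq_norm, dist_eq_norm, norm_sub_rev (x':(EuclideanSpace ℝ (Fin n)))]
          _ ≤ 5*ε := by linarith
      have : |4*‖u‖| = 4*‖u‖ := abs_of_nonneg (by positivity)
      rw [Real.norm_eq_abs, this]
      nlinarith
    calc ‖u - B u‖ = ⨅ v : Q.direction, ‖u - v‖ := by
          rw [hB]; exact Submodule.starProjection_minimal u
      _ ≤ ‖u - (⟨w, hwQ⟩ : Q.direction)‖ := ciInf_le ⟨0, by rintro _ ⟨v, rfl⟩; positivity⟩ _
      _ ≤ 20*ε*‖u‖ := huw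
  -- directions of Q are 25ε-close to P.direction
  have hdirQ : ∀ v : (EuclideanSpace ℝ (Fin n)), v ∈ Q.direction → ‖v - A v‖ ≤ 25*ε*‖v‖ := by
    intro v hv
    rcases eq_or_ne v 0 with rfl | hvne
    · simp
    have hn : ‖v‖ ≠ 0 := norm_ne_zero_iff.2 hvne
    have hnpos : (0:ℝ) < ‖v‖ := norm_pos_iff.2 hvne
    set s : ℝ := (1 - 10*ε)/4 with hs
    have hspos : 0 < s := by rw [hs]; linarith
    set q : EuclideanSpace ℝ (Fin n) := (s/‖v‖) • v + x' with hq
    have hqQ : q ∈ Q := by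
      have : (s/‖v‖) • v ∈ Q.direction := Submodule.smul_mem _ _ hv
      simpa [hq] using AffineSubspace.vadd_mem_of_mem_direction this hx'Q
    have hqball : q ∈ Metric.closedBall x (1/4) := by
      have h1 : dist q x' = s := by
        rw [hq, dist_eq_norm, add_sub_cancel_right, norm_smul, Real.norm_eq_abs,
          abs_of_nonneg (div_nonneg hspos.le (norm_nonneg v)), div_mul_cancel₀ _ hn]
      have h2 : dist q x ≤ dist q x' + dist x' x := dist_triangle _ _ _
      rw [mem_closedBall]
      rw [dist_comm x' x, h1, hs] at h2
      linarith
    have hinf : Metric.infDist q (P : Set (EuclideanSpace ℝ (Fin n))) ≤ 10*ε/4 := by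
      have := key2 q ⟨hqQ, hqball⟩
      linarith
    obtain ⟨p, hpP, hpd⟩ := hPcl.exists_infDist_eq_dist hPne q
    have hqp : dist q p ≤ 10*ε/4 := by rw [← hpd]; exact hinf
    set w : EuclideanSpace ℝ (Fin n) := (‖v‖/s) • (p - x) with hw
    have hwP : w ∈ P.direction := by
      have : p - x ∈ P.direction := by
        simpa using AffineSubspace.vsub_mem_direction hpP hxP
      exact Submodule.smul_mem _ _ this
    have hkey : v - w = (‖v‖/s) • ((q - p) + (x - x')) := by
      have hsc : (‖v‖/s) • ((s/‖v‖) • v) = v := by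
        rw [smul_smul, div_mul_div_comm, mul_comm ‖v‖ s, div_self (by positivity), one_smul]
      simp only [hw, hq, smul_add, smul_sub, hsc]
      abel
    have hvw : ‖v - w‖ ≤ 25*ε*‖v‖ := by
      rw [hkey, norm_smul]
      have h1 : ‖(q - p) + (x - x')‖ ≤ 5*ε := by
        calc ‖(q - p) + (x - x')‖ ≤ ‖q - p‖ + ‖x - x'‖ := norm_add_le _ _
          _ = dist q p + dist x x' := by rw [dist_eq_norm, dist_eq_norm]
          _ ≤ 5*ε := by linarith
      have habs : |‖v‖/s| = ‖v‖/s := abs_of_nonneg (by positivity)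
      rw [Real.norm_eq_abs, habs]
      have hs5 : ‖v‖/s ≤ 5*‖v‖ := by
        rw [div_le_iff₀ hspos, hs]
        nlinarith
      nlinarith [norm_nonneg ((q - p) + (x - x')), mul_le_mul_of_nonneg_left h1 (le_of_lt (by positivity : (0:ℝ) < ‖v‖/s))]
    calc ‖v - A v‖ = ⨅ u : P.direction, ‖v - u‖ := by
          rw [hA]; exact Submodule.starProjection_minimal v
      _ ≤ ‖v - (⟨w, hwP⟩ : P.direction)‖ := ciInf_le ⟨0, by rintro _ ⟨u, rfl⟩; positivity⟩ _
      _ ≤ 25*ε*‖v‖ := hvw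
  -- operator inequalities
  have hAmem : ∀ w : (EuclideanSpace ℝ (Fin n)), A w ∈ P.direction := fun w => (P.direction.orthogonalProjection w).2
  have hBmem : ∀ w : (EuclideanSpace ℝ (Fin n)), B w ∈ Q.direction := fun w => (Q.direction.orthogonalProjection w).2
  set I : (EuclideanSpace ℝ (Fin n)) →L[ℝ] EuclideanSpace ℝ (Fin n) := ContinuousLinearMap.id ℝ (EuclideanSpace ℝ (Fin n)) with hI
  have h1 : ‖(I - B).comp A‖ ≤ 20*ε := by
    apply ContinuousLinearMap.opNorm_le_bound _ (by positivity)
    intro w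
    have := hdirP (A w) (hAmem w)
    have h2 : 20*ε*‖A w‖ ≤ 20*ε*‖w‖ := mul_le_mul_of_nonneg_left (hAle w) (by positivity)
    simpa [hI] using le_trans this h2
  have h2 : ‖(I - A).comp B‖ ≤ 25*ε := by
    apply ContinuousLinearMap.opNorm_le_bound _ (by positivity)
    intro w
    have := hdirQ (B w) (hBmem w)
    have h2 : 25*ε*‖B w‖ ≤ 25*ε*‖w‖ := mul_le_mul_of_nonneg_left (hBle w) (by positivity)
    simpa [hI] using le_trans this h2
  -- use adjoints: ‖A ∘ (I - B)‖ = ‖(I - B) ∘ A‖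
  have hAsa : IsSelfAdjoint A := isSelfAdjoint_starProjection P.direction
  have hBsa : IsSelfAdjoint B := isSelfAdjoint_starProjection Q.direction
  have hIBsa : ContinuousLinearMap.adjoint (I - B) = I - B := by
    rw [map_sub, hBsa.adjoint_eq, hI, ContinuousLinearMap.adjoint_id]
  have hadj : ‖A.comp (I - B)‖ = ‖(I - B).comp A‖ := by
    have : A.comp (I - B) = ContinuousLinearMap.adjoint ((I - B).comp A) := by
      rw [ContinuousLinearMap.adjoint_comp, hAsa.adjoint_eq, hIBsa]
    rw [this, ContinuousLinearMap.adjoint.norm_map]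
  have hsplit : A - B = A.comp (I - B) + (A - I).comp B := by
    ext w
    simp [hI, ContinuousLinearMap.comp_apply, ContinuousLinearMap.sub_apply,
      ContinuousLinearMap.add_apply, map_sub]
  have hnegnorm : ‖(A - I).comp B‖ = ‖(I - A).comp B‖ := by
    have : (A - I).comp B = -((I - A).comp B) := by
      ext w; simp [ContinuousLinearMap.comp_apply, ContinuousLinearMap.sub_apply,
        ContinuousLinearMap.neg_apply]
    rw [this, norm_neg]
  calc ‖A - B‖ = ‖A.comp (I - B) + (A - I).comp B‖ := by rw [hsplit]
    _ ≤ ‖A.comp (I - B)‖ + ‖(A - I).comp B‖ := norm_add_le _ _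
    _ = ‖(I - B).comp A‖ + ‖(I - A).comp B‖ := by rw [hadj, hnegnorm]
    _ ≤ 20*ε + 25*ε := add_le_add h1 h2
    _ ≤ 100*ε := by linarith
end

section
/- Let P be a d-plane through x in R^n, and let S ⊂ B(x,4a) be a set such that any two distinct points of S are at distance ≥ a, and dist(y,P) ≤ ε for all y ∈ S, with ε ≤ a/8. Then for all y, z ∈ S, |π^⊥(y) − π^⊥(z)| ≤ (4/a)·ε·|π(y) − π(z)|, where π and π^⊥ are the orthogonal projections onto P and its orthogonal complement. In particular, π is injective on S and S is contained in a (4ε/a)-Lipschitz graph over P. -/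
open Metric Set

theorem aux_proj_norm_le {n : ℕ} (V : Submodule ℝ (EuclideanSpace ℝ (Fin n)))
    (v : EuclideanSpace ℝ (Fin n)) :
    ‖(Submodule.orthogonalProjection V v : EuclideanSpace ℝ (Fin n))‖ ≤ ‖v‖ := by
  have h := (Submodule.orthogonalProjection V).le_opNorm v
  calc ‖(Submodule.orthogonalProjection V v : EuclideanSpace ℝ (Fin n))‖
      = ‖Submodule.orthogonalProjection V v‖ := rfl
    _ ≤ ‖Submodule.orthogonalProjection V‖ * ‖v‖ := h
    _ ≤ 1 * ‖v‖ := by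
        apply mul_le_mul_of_nonneg_right (Submodule.orthogonalProjection_norm_le V) (norm_nonneg v)
    _ = ‖v‖ := one_mul _

/-- If `S ⊂ B(x,4a)` is `a`-separated and each point of `S` is within `ε ≤ a/8` of a
`d`-plane `P` through `x`, then for `y, z ∈ S`,
`|π^⊥ y − π^⊥ z| ≤ (4/a) ε |π y − π z|`, where `π, π^⊥` are the orthogonal projections
onto the direction of `P` and its orthogonal complement; in particular `π` is injective
on `S`. -/
theorem stmt5 (n d : ℕ) (hd : 0 < d) (hdn : d < n) (a ε : ℝ) (ha : 0 < a) (hε : 0 ≤ ε)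
    (hεa : ε ≤ a / 8)
    (x : EuclideanSpace ℝ (Fin n))
    (P : AffineSubspace ℝ (EuclideanSpace ℝ (Fin n)))
    (hxP : x ∈ P) (hrank : Module.finrank ℝ P.direction = d)
    (S : Set (EuclideanSpace ℝ (Fin n)))
    (hSB : S ⊆ Metric.closedBall x (4 * a))
    (hsep : ∀ y ∈ S, ∀ z ∈ S, y ≠ z → a ≤ dist y z)
    (hdistP : ∀ y ∈ S, Metric.infDist y (P : Set (EuclideanSpace ℝ (Fin n))) ≤ ε) :
    (∀ y ∈ S, ∀ z ∈ S,
      ‖(Submodule.orthogonalProjection P.directionᗮ y : EuclideanSpace ℝ (Fin n))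
          - Submodule.orthogonalProjection P.directionᗮ z‖
        ≤ (4 / a) * ε *
          ‖(Submodule.orthogonalProjection P.direction y : EuclideanSpace ℝ (Fin n))
            - Submodule.orthogonalProjection P.direction z‖)
    ∧ Set.InjOn (fun y => (Submodule.orthogonalProjection P.direction y : EuclideanSpace ℝ (Fin n))) S := by
  set V := P.direction with hV
  -- each point of S has its Vᗮ-projection within ε of that of x
  have hperp : ∀ y ∈ S, ‖(Submodule.orthogonalProjection Vᗮ y : EuclideanSpace ℝ (Fin n))
      - Submodule.orthogonalProjection Vᗮ x‖ ≤ ε := by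
    intro y hy
    refine le_trans ?_ (hdistP y hy)
    rw [← not_lt]
    intro hlt
    obtain ⟨p, hp, hdp⟩ := (infDist_lt_iff ⟨x, hxP⟩).mp hlt
    have hpx : (p - x : EuclideanSpace ℝ (Fin n)) ∈ V := by
      simpa using AffineSubspace.vsub_mem_direction hp hxP
    have h0 : Submodule.orthogonalProjection Vᗮ (p - x) = 0 :=
      Submodule.orthogonalProjectionOnto_apply_of_mem_orthogonal
        (Submodule.le_orthogonal_orthogonal V hpx)
    have hxp : (Submodule.orthogonalProjection Vᗮ p : EuclideanSpace ℝ (Fin n))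
        = Submodule.orthogonalProjection Vᗮ x := by
      have h1 : Submodule.orthogonalProjection Vᗮ p - Submodule.orthogonalProjection Vᗮ x = 0 := by
        rw [← map_sub, h0]
      exact congrArg Subtype.val (sub_eq_zero.mp h1)
    have hle : ‖(Submodule.orthogonalProjection Vᗮ y : EuclideanSpace ℝ (Fin n))
        - Submodule.orthogonalProjection Vᗮ x‖ ≤ dist y p := by
      calc ‖(Submodule.orthogonalProjection Vᗮ y : EuclideanSpace ℝ (Fin n))
            - Submodule.orthogonalProjection Vᗮ x‖
          = ‖(Submodule.orthogonalProjection Vᗮ (y - p) : EuclideanSpace ℝ (Fin n))‖ := by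
            rw [map_sub]; push_cast; rw [hxp]
        _ ≤ ‖y - p‖ := aux_proj_norm_le _ _
        _ = dist y p := (dist_eq_norm y p).symm
    linarith
  -- hence for y z ∈ S, the perp projections differ by at most 2ε
  have hperp2 : ∀ y ∈ S, ∀ z ∈ S, ‖(Submodule.orthogonalProjection Vᗮ y : EuclideanSpace ℝ (Fin n))
      - Submodule.orthogonalProjection Vᗮ z‖ ≤ 2 * ε := by
    intro y hy z hz
    calc ‖(Submodule.orthogonalProjection Vᗮ y : EuclideanSpace ℝ (Fin n)) - Submodule.orthogonalProjection Vᗮ z‖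
        = ‖((Submodule.orthogonalProjection Vᗮ y : EuclideanSpace ℝ (Fin n)) - Submodule.orthogonalProjection Vᗮ x)
            - ((Submodule.orthogonalProjection Vᗮ z : EuclideanSpace ℝ (Fin n))
              - Submodule.orthogonalProjection Vᗮ x)‖ := by
          rw [sub_sub_sub_cancel_right]
      _ ≤ ‖(Submodule.orthogonalProjection Vᗮ y : EuclideanSpace ℝ (Fin n)) - Submodule.orthogonalProjection Vᗮ x‖
            + ‖(Submodule.orthogonalProjection Vᗮ z : EuclideanSpace ℝ (Fin n))
              - Submodule.orthogonalProjection Vᗮ x‖ :=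
          norm_sub_le _ _
      _ ≤ ε + ε := add_le_add (hperp y hy) (hperp z hz)
      _ = 2 * ε := by ring
  -- separation in the plane direction
  have hkey : ∀ y ∈ S, ∀ z ∈ S, y ≠ z →
      a / 2 ≤ ‖(Submodule.orthogonalProjection V y : EuclideanSpace ℝ (Fin n))
        - Submodule.orthogonalProjection V z‖ := by
    intro y hy z hz hyz
    have hpyth := Submodule.norm_sq_eq_add_norm_sq_projection (y - z) V
    have h1 : ‖Submodule.orthogonalProjection V (y - z)‖
        = ‖(Submodule.orthogonalProjection V y : EuclideanSpace ℝ (Fin n))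
          - Submodule.orthogonalProjection V z‖ := by
      rw [map_sub]
      rfl
    have h2 : ‖Submodule.orthogonalProjection Vᗮ (y - z)‖
        = ‖(Submodule.orthogonalProjection Vᗮ y : EuclideanSpace ℝ (Fin n))
          - Submodule.orthogonalProjection Vᗮ z‖ := by
      rw [map_sub]
      rfl
    rw [h1, h2] at hpyth
    have ha2 : a ≤ ‖y - z‖ := by
      have := hsep y hy z hz hyz
      rwa [dist_eq_norm] at this
    have hp2 := hperp2 y hy z hz
    have hn1 : (0:ℝ) ≤ ‖(Submodule.orthogonalProjection V y : EuclideanSpace ℝ (Fin n))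
        - Submodule.orthogonalProjection V z‖ := norm_nonneg _
    have hn2 : (0:ℝ) ≤ ‖(Submodule.orthogonalProjection Vᗮ y : EuclideanSpace ℝ (Fin n))
        - Submodule.orthogonalProjection Vᗮ z‖ := norm_nonneg _
    nlinarith [hpyth, ha2, hp2, hεa, hε, ha, norm_nonneg (y - z)]
  constructor
  · intro y hy z hz
    by_cases hyz : y = z
    · subst hyz
      simp
    · have h1 := hperp2 y hy z hz
      have h2 := hkey y hy z hz hyz
      have h4 : 2 * ε ≤ (4 / a) * ε *
          ‖(Submodule.orthogonalProjection V y : EuclideanSpace ℝ (Fin n))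
            - Submodule.orthogonalProjection V z‖ := by
        have h3 : (4 / a) * ε * (a / 2) = 2 * ε := by field_simp; ring
        calc 2 * ε = (4 / a) * ε * (a / 2) := h3.symm
          _ ≤ (4 / a) * ε * ‖(Submodule.orthogonalProjection V y : EuclideanSpace ℝ (Fin n))
              - Submodule.orthogonalProjection V z‖ := by
            apply mul_le_mul_of_nonneg_left h2
            positivity
      exact le_trans h1 h4
  · intro y hy z hz hpq
    by_contra hyz
    have h2 := hkey y hy z hz hyz
    simp only at hpq
    rw [hpq, sub_self, norm_zero] at h2
    linarith
end

section
/- Let P be a d-plane in R^n and F: P → P^⊥ an L-Lipschitz map with L ≤ 1/2, and let G = {w + F(w) : w ∈ P} be its graph. If y ∈ G, then the orthogonal projection of G ∩ B(y, 3a) onto P contains P_y ∩ B(π(y), 2a), where π is projection onto P. Consequently, any subset T ⊃ G ∩ B(y,3a) on which π is injective satisfies T ∩ B(y,2a) = G ∩ B(y,2a) whenever T ∩ B(y,4a) is contained in a Lipschitz graph over P. -/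
open Metric Set

/-- Let `P = {p + w : w ∈ K}` be a `d`-plane in `ℝⁿ` (with direction `K`), `F : K → Kᗮ`
an `L`-Lipschitz map with `L ≤ 1/2`, and `G` its graph. If `y ∈ G`, then the orthogonal
projection `π` onto `P` maps `G ∩ B(y,3a)` onto a set containing `P ∩ B(π y, 2a)`.
Consequently, any set `T ⊇ G ∩ B(y,3a)` such that `π` is injective on `T ∩ B(y,4a)`
satisfies `T ∩ B(y,2a) = G ∩ B(y,2a)`. -/
theorem stmt6 (n d : ℕ) (hd : 0 < d) (hdn : d < n) (a : ℝ) (ha : 0 < a)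
    (K : Submodule ℝ (EuclideanSpace ℝ (Fin n))) (hK : Module.finrank ℝ K = d)
    (p : EuclideanSpace ℝ (Fin n))
    (L : NNReal) (hL : (L : ℝ) ≤ 1 / 2)
    (F : K → (Kᗮ : Submodule ℝ (EuclideanSpace ℝ (Fin n)))) (hF : LipschitzWith L F)
    (G : Set (EuclideanSpace ℝ (Fin n)))
    (hG : G = {v | ∃ w : K, v = p + (w : EuclideanSpace ℝ (Fin n)) + (F w : EuclideanSpace ℝ (Fin n))})
    (π : EuclideanSpace ℝ (Fin n) → EuclideanSpace ℝ (Fin n))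
    (hπ : π = fun v => p + (Submodule.orthogonalProjectionOnto K (v - p) : EuclideanSpace ℝ (Fin n)))
    (y : EuclideanSpace ℝ (Fin n)) (hy : y ∈ G) :
    ({v | ∃ w : K, v = p + (w : EuclideanSpace ℝ (Fin n))} ∩ Metric.closedBall (π y) (2 * a)
        ⊆ π '' (G ∩ Metric.closedBall y (3 * a)))
    ∧ ∀ T : Set (EuclideanSpace ℝ (Fin n)), G ∩ Metric.closedBall y (3 * a) ⊆ T →
        Set.InjOn π (T ∩ Metric.closedBall y (4 * a)) →
        T ∩ Metric.closedBall y (2 * a) = G ∩ Metric.closedBall y (2 * a) := by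
  rw [hG] at hy
  obtain ⟨w₀, hw₀⟩ := hy
  -- projection of graph points
  have hproj : ∀ w : K, Submodule.orthogonalProjectionOnto K
      ((w : EuclideanSpace ℝ (Fin n)) + (F w : EuclideanSpace ℝ (Fin n))) = w := by
    intro w
    rw [map_add, Submodule.orthogonalProjectionOnto_mem_subspace_eq_self,
      Submodule.orthogonalProjectionOnto_apply_of_mem_orthogonal (F w).2, add_zero]
  have hπG : ∀ w : K, π (p + (w : EuclideanSpace ℝ (Fin n)) + (F w : EuclideanSpace ℝ (Fin n)))
      = p + (w : EuclideanSpace ℝ (Fin n)) := by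
    intro w
    rw [hπ]
    simp only
    have h1 : p + (w : EuclideanSpace ℝ (Fin n)) + (F w : EuclideanSpace ℝ (Fin n)) - p
        = (w : EuclideanSpace ℝ (Fin n)) + (F w : EuclideanSpace ℝ (Fin n)) := by abel
    rw [h1, hproj]
  have hπy : π y = p + (w₀ : EuclideanSpace ℝ (Fin n)) := by rw [hw₀]; exact hπG w₀
  -- contraction property of π
  have hπlip : ∀ u v : EuclideanSpace ℝ (Fin n), dist (π u) (π v) ≤ dist u v := by
    intro u v
    rw [hπ, dist_eq_norm, dist_eq_norm]
    simp only
    have h1 : p + (Submodule.orthogonalProjectionOnto K (u - p) : EuclideanSpace ℝ (Fin n))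
        - (p + (Submodule.orthogonalProjectionOnto K (v - p) : EuclideanSpace ℝ (Fin n)))
        = (Submodule.orthogonalProjectionOnto K (u - p) - Submodule.orthogonalProjectionOnto K (v - p)
          : K) := by push_cast; abel
    rw [h1, ← map_sub]
    have h2 : (u - p) - (v - p) = u - v := by abel
    rw [h2]
    calc ‖((Submodule.orthogonalProjectionOnto K (u - v) : K) : EuclideanSpace ℝ (Fin n))‖
        = ‖(Submodule.orthogonalProjectionOnto K (u - v) : K)‖ := rfl
      _ ≤ ‖Submodule.orthogonalProjectionOnto K‖ * ‖u - v‖ := (Submodule.orthogonalProjectionOnto K).le_opNorm _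
      _ ≤ 1 * ‖u - v‖ := by
          exact mul_le_mul_of_nonneg_right (Submodule.orthogonalProjectionOnto_norm_le K) (norm_nonneg _)
      _ = ‖u - v‖ := one_mul _
  -- main inclusion (part 1)
  have hmain : {v | ∃ w : K, v = p + (w : EuclideanSpace ℝ (Fin n))}
      ∩ Metric.closedBall (π y) (2 * a) ⊆ π '' (G ∩ Metric.closedBall y (3 * a)) := by
    rintro v ⟨⟨w, rfl⟩, hball⟩
    refine ⟨p + (w : EuclideanSpace ℝ (Fin n)) + (F w : EuclideanSpace ℝ (Fin n)),
      ⟨hG ▸ ⟨w, rfl⟩, ?_⟩, hπG w⟩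
    rw [mem_closedBall] at hball ⊢
    have hdww : dist w w₀ ≤ 2 * a := by
      have : dist (p + (w : EuclideanSpace ℝ (Fin n))) (π y)
          = dist w w₀ := by
        rw [hπy, dist_eq_norm, dist_eq_norm]
        have h1 : p + (w : EuclideanSpace ℝ (Fin n)) - (p + (w₀ : EuclideanSpace ℝ (Fin n)))
            = ((w - w₀ : K) : EuclideanSpace ℝ (Fin n)) := by push_cast; abel
        rw [h1]
        rfl
      linarith [this ▸ hball]
    have hFd : dist (F w) (F w₀) ≤ a := by
      calc dist (F w) (F w₀) ≤ L * dist w w₀ := hF.dist_le_mul _ _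
        _ ≤ (1 / 2) * (2 * a) := by
            apply mul_le_mul hL hdww dist_nonneg (by norm_num)
        _ = a := by ring
    rw [hw₀]
    have h1 : dist (p + (w : EuclideanSpace ℝ (Fin n)) + (F w : EuclideanSpace ℝ (Fin n)))
        (p + (w₀ : EuclideanSpace ℝ (Fin n)) + (F w₀ : EuclideanSpace ℝ (Fin n)))
        ≤ dist w w₀ + dist (F w) (F w₀) := by
      rw [dist_eq_norm]
      have h2 : p + (w : EuclideanSpace ℝ (Fin n)) + (F w : EuclideanSpace ℝ (Fin n))
          - (p + (w₀ : EuclideanSpace ℝ (Fin n)) + (F w₀ : EuclideanSpace ℝ (Fin n)))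
          = ((w - w₀ : K) : EuclideanSpace ℝ (Fin n))
            + ((F w - F w₀ : Kᗮ) : EuclideanSpace ℝ (Fin n)) := by push_cast; abel
      rw [h2]
      refine (norm_add_le _ _).trans ?_
      rw [dist_eq_norm, dist_eq_norm]
      rfl
    linarith
  refine ⟨hmain, fun T hT hinj => ?_⟩
  ext t
  constructor
  · rintro ⟨htT, htb⟩
    have hπt : π t ∈ {v | ∃ w : K, v = p + (w : EuclideanSpace ℝ (Fin n))}
        ∩ Metric.closedBall (π y) (2 * a) := by
      refine ⟨⟨Submodule.orthogonalProjectionOnto K (t - p), by rw [hπ]⟩, ?_⟩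
      rw [mem_closedBall]
      exact le_trans (hπlip t y) htb
    obtain ⟨g, ⟨hgG, hgb⟩, hgπ⟩ := hmain hπt
    have hteq : t = g := by
      apply hinj
      · exact ⟨htT, closedBall_subset_closedBall (by linarith) htb⟩
      · exact ⟨hT ⟨hgG, hgb⟩, closedBall_subset_closedBall (by linarith) hgb⟩
      · exact hgπ.symm
    exact ⟨hteq ▸ hgG, htb⟩
  · rintro ⟨hgG, hb⟩
    exact ⟨hT ⟨hgG, closedBall_subset_closedBall (by linarith) hb⟩, hb⟩
end

section
/- Let Σ ⊂ R^n be a closed set and δ > 0 such that for every y ∈ Σ, Σ ∩ B(y, δ) is a connected set containing y (e.g., a Lipschitz graph piece through y). Suppose E ⊂ R^n satisfies dist(x,Σ) ≤ δ/10 for all x ∈ E and dist(z,E) ≤ δ/10 for all z ∈ Σ. If E is connected (or even δ/2-chain-connected), then Σ is connected. -/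
open Metric Set

/-- `E` is `ρ`-chain-connected: any two points of `E` are joined by a finite chain of
points of `E` with consecutive gaps at most `ρ`. -/
def ChainConnected {α : Type*} [PseudoMetricSpace α] (ρ : ℝ) (E : Set α) : Prop :=
  ∀ b₁ ∈ E, ∀ b₂ ∈ E, ∃ m : ℕ, ∃ w : ℕ → α,
    w 0 = b₁ ∧ w m = b₂ ∧ (∀ i ≤ m, w i ∈ E) ∧ ∀ i < m, dist (w (i + 1)) (w i) ≤ ρ

/-- If `Σ` is closed, locally connected at scale `δ` (each `Σ ∩ B(y,δ)` is connected),
`E` and `Σ` are at mutual distance `≤ δ/10`, and `E` is nonempty and `δ/2`-chain-connected,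
then `Σ` is connected. -/
theorem stmt8 (n : ℕ) (δ : ℝ) (hδ : 0 < δ)
    (S E : Set (EuclideanSpace ℝ (Fin n))) (hScl : IsClosed S)
    (hloc : ∀ y ∈ S, IsConnected (S ∩ Metric.ball y δ))
    (hEne : E.Nonempty)
    (h1 : ∀ x ∈ E, ∃ z ∈ S, dist x z ≤ δ / 10)
    (h2 : ∀ z ∈ S, ∃ x ∈ E, dist z x ≤ δ / 10)
    (hch : ChainConnected (δ / 2) E) :
    IsConnected S := by
  -- S is nonempty
  obtain ⟨x₀, hx₀⟩ := hEne
  obtain ⟨z₀, hz₀S, _⟩ := h1 x₀ hx₀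
  -- key step: nearby points of S are in the same connected component in S
  have step : ∀ z ∈ S, ∀ z' ∈ S, dist z' z < δ →
      z' ∈ connectedComponentIn S z := by
    intro z hz z' hz' hd
    have hpre := (hloc z hz).isPreconnected
    have hsub : S ∩ Metric.ball z δ ⊆ connectedComponentIn S z :=
      hpre.subset_connectedComponentIn ⟨hz, mem_ball_self hδ⟩ inter_subset_left
    exact hsub ⟨hz', by simpa [mem_ball] using hd⟩
  constructor
  · exact ⟨z₀, hz₀S⟩
  · apply isPreconnected_of_forall_pair
    intro z hz z' hz'
    refine ⟨connectedComponentIn S z, connectedComponentIn_subset S z,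
      mem_connectedComponentIn hz, ?_,
      (isPreconnected_connectedComponentIn)⟩
    -- find chain
    obtain ⟨x, hxE, hxd⟩ := h2 z hz
    obtain ⟨x', hx'E, hx'd⟩ := h2 z' hz'
    obtain ⟨m, w, hw0, hwm, hwE, hwd⟩ := hch x hxE x' hx'E
    -- by induction: for each i ≤ m, there is z_i ∈ S near w i in the component of z
    have key : ∀ i ≤ m, ∃ zi ∈ S, dist (w i) zi ≤ δ / 10 ∧
        zi ∈ connectedComponentIn S z := by
      intro i
      induction i with
      | zero =>
        intro _
        exact ⟨z, hz, by rw [hw0]; simpa [dist_comm] using hxd,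
          mem_connectedComponentIn hz⟩
      | succ i ih =>
        intro hle
        obtain ⟨zi, hziS, hzid, hzic⟩ := ih (Nat.le_of_succ_le hle)
        obtain ⟨zj, hzjS, hzjd⟩ := h1 (w (i + 1)) (hwE _ hle)
        refine ⟨zj, hzjS, hzjd, ?_⟩
        have hd : dist zj zi < δ := by
          calc dist zj zi ≤ dist zj (w (i+1)) + dist (w (i+1)) (w i) + dist (w i) zi :=
                dist_triangle4 _ _ _ _
            _ ≤ δ/10 + δ/2 + δ/10 := by
                gcongr
                · simpa [dist_comm] using hzjd
                · exact hwd i (Nat.lt_of_succ_le hle)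
            _ < δ := by linarith
        have := step zi hziS zj hzjS hd
        rwa [connectedComponentIn_eq hzic]
    obtain ⟨zm, hzmS, hzmd, hzmc⟩ := key m le_rfl
    have hd : dist z' zm < δ := by
      calc dist z' zm ≤ dist z' x' + dist x' zm := dist_triangle _ _ _
        _ ≤ δ/10 + δ/10 := by
            gcongr
            rw [← hwm]; exact hzmd
        _ < δ := by linarith
    have := step zm hzmS z' hz' hd
    rwa [connectedComponentIn_eq hzmc]
end

section
/- Let P be the hyperplane {x_n = 0} in R^n, F: P → R a smooth function with ‖DF‖_∞ ≤ λε and ‖D²F‖_∞ ≤ λε/r, with ε small (depending on λ, n), and ν(w) the upward unit normal to the graph of F at (w,F(w)). Define ξ_+(w) = (w, F(w)) + t ν(w) with t = 5C_0 ε r. Then the map ψ = π ∘ ξ_+ (π being projection onto P) satisfies |Dψ(w) − I| ≤ Cε for all w, and hence ψ is a bijection of P with (1+Cε)-Lipschitz inverse; consequently the set G_+ = {ξ_+(w): w ∈ P} is the graph over P of a Cε-Lipschitz function. -/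
open Metric Set
set_option maxHeartbeats 1000000

/-- The point `(−∇F(w), 1)` of `P × ℝ ≅ ℝⁿ` (with the Euclidean `L²` product norm). -/
noncomputable def preNormal (m : ℕ) (F : EuclideanSpace ℝ (Fin m) → ℝ)
    (w : EuclideanSpace ℝ (Fin m)) : WithLp 2 (EuclideanSpace ℝ (Fin m) × ℝ) :=
  (WithLp.equiv 2 (EuclideanSpace ℝ (Fin m) × ℝ)).symm (-(gradient F w), 1)

/-- The upward unit normal to the graph of `F` at `(w, F(w))`. -/
noncomputable def unitNormal (m : ℕ) (F : EuclideanSpace ℝ (Fin m) → ℝ)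
    (w : EuclideanSpace ℝ (Fin m)) : WithLp 2 (EuclideanSpace ℝ (Fin m) × ℝ) :=
  ‖preNormal m F w‖⁻¹ • preNormal m F w

/-- The graph point `(w, F(w))`. -/
noncomputable def graphPt (m : ℕ) (F : EuclideanSpace ℝ (Fin m) → ℝ)
    (w : EuclideanSpace ℝ (Fin m)) : WithLp 2 (EuclideanSpace ℝ (Fin m) × ℝ) :=
  (WithLp.equiv 2 (EuclideanSpace ℝ (Fin m) × ℝ)).symm (w, F w)

/-- The graph pushed off along its normal by distance `t`: `ξ_+(w) = (w,F(w)) + t ν(w)`. -/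
noncomputable def pushedPt (m : ℕ) (F : EuclideanSpace ℝ (Fin m) → ℝ) (t : ℝ)
    (w : EuclideanSpace ℝ (Fin m)) : WithLp 2 (EuclideanSpace ℝ (Fin m) × ℝ) :=
  graphPt m F w + t • unitNormal m F w

/-- `ψ = π ∘ ξ_+`, the horizontal projection of the pushed-off point. -/
noncomputable def pushedProj (m : ℕ) (F : EuclideanSpace ℝ (Fin m) → ℝ) (t : ℝ)
    (w : EuclideanSpace ℝ (Fin m)) : EuclideanSpace ℝ (Fin m) :=
  (WithLp.equiv 2 (EuclideanSpace ℝ (Fin m) × ℝ) (pushedPt m F t w)).1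

section stmt12aux
variable {E : Type*} [NormedAddCommGroup E] [NormedSpace ℝ E]

noncomputable def sA (v : E) : ℝ := Real.sqrt (1 + ‖v‖ ^ 2)

lemma sq_sA (v : E) : sA v ^ 2 = 1 + ‖v‖ ^ 2 := Real.sq_sqrt (by positivity)

lemma one_le_sA (v : E) : 1 ≤ sA v := by
  have h1 := sq_sA v
  have h2 : 0 ≤ sA v := Real.sqrt_nonneg _
  nlinarith [sq_nonneg ‖v‖]

lemma sA_pos (v : E) : 0 < sA v := lt_of_lt_of_le one_pos (one_le_sA v)

lemma sA_ne_zero (v : E) : sA v ≠ 0 := ne_of_gt (sA_pos v)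

lemma sA_sub_le {v w : E} (hv : ‖v‖ ≤ 1) (hw : ‖w‖ ≤ 1) : |sA v - sA w| ≤ ‖v - w‖ := by
  have h1 : sA v ^ 2 - sA w ^ 2 = ‖v‖ ^ 2 - ‖w‖ ^ 2 := by rw [sq_sA, sq_sA]; ring
  have h2 : 1 ≤ sA v := one_le_sA v
  have h3 : 1 ≤ sA w := one_le_sA w
  have h4' := abs_le.mp (abs_norm_sub_norm_le v w)
  have hv0 : 0 ≤ ‖v‖ := norm_nonneg v
  have hw0 : 0 ≤ ‖w‖ := norm_nonneg w
  rw [abs_le]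
  constructor <;> nlinarith [sq_nonneg (sA v - sA w), sq_nonneg (sA v + sA w)]

lemma inv_sA_sub_le {v w : E} (hv : ‖v‖ ≤ 1) (hw : ‖w‖ ≤ 1) :
    |(sA v)⁻¹ - (sA w)⁻¹| ≤ ‖v - w‖ := by
  rw [inv_sub_inv (sA_ne_zero v) (sA_ne_zero w), abs_div,
    abs_of_pos (mul_pos (sA_pos v) (sA_pos w))]
  have h1 : |sA w - sA v| ≤ ‖v - w‖ := by rw [abs_sub_comm]; exact sA_sub_le hv hw
  have h2 : 1 ≤ sA v * sA w := one_le_mul_of_one_le_of_one_le (one_le_sA v) (one_le_sA w)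
  calc |sA w - sA v| / (sA v * sA w) ≤ |sA w - sA v| / 1 :=
        div_le_div_of_nonneg_left (abs_nonneg _) one_pos h2 |>.trans_eq rfl
    _ = |sA w - sA v| := div_one _
    _ ≤ ‖v - w‖ := h1

lemma N_lip {v w : E} (hv : ‖v‖ ≤ 1) (hw : ‖w‖ ≤ 1) :
    ‖(sA v)⁻¹ • v - (sA w)⁻¹ • w‖ ≤ 2 * ‖v - w‖ := by
  have hsplit : (sA v)⁻¹ • v - (sA w)⁻¹ • w
      = ((sA v)⁻¹ - (sA w)⁻¹) • v + (sA w)⁻¹ • (v - w) := by module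
  rw [hsplit]
  have h1 : ‖((sA v)⁻¹ - (sA w)⁻¹) • v‖ ≤ ‖v - w‖ := by
    rw [norm_smul, Real.norm_eq_abs]
    calc |(sA v)⁻¹ - (sA w)⁻¹| * ‖v‖ ≤ ‖v - w‖ * 1 :=
          mul_le_mul (inv_sA_sub_le hv hw) hv (norm_nonneg v) (norm_nonneg _)
      _ = ‖v - w‖ := mul_one _
  have h2 : ‖(sA w)⁻¹ • (v - w)‖ ≤ ‖v - w‖ := by
    rw [norm_smul, Real.norm_eq_abs, abs_of_pos (inv_pos.mpr (sA_pos w))]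
    calc (sA w)⁻¹ * ‖v - w‖ ≤ 1 * ‖v - w‖ :=
          mul_le_mul_of_nonneg_right (inv_le_one_of_one_le₀ (one_le_sA w)) (norm_nonneg _)
      _ = ‖v - w‖ := one_mul _
  calc ‖_ + _‖ ≤ ‖((sA v)⁻¹ - (sA w)⁻¹) • v‖ + ‖(sA w)⁻¹ • (v - w)‖ := norm_add_le _ _
    _ ≤ ‖v - w‖ + ‖v - w‖ := add_le_add h1 h2
    _ = 2 * ‖v - w‖ := by ring

end stmt12aux

lemma norm_preNormal (m : ℕ) (F : EuclideanSpace ℝ (Fin m) → ℝ) (w : EuclideanSpace ℝ (Fin m)) :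
    ‖preNormal m F w‖ = sA (gradient F w) := by
  rw [preNormal, sA, WithLp.prod_norm_eq_of_L2]
  simp [norm_neg, add_comm]

lemma pushedProj_eq (m : ℕ) (F : EuclideanSpace ℝ (Fin m) → ℝ) (t : ℝ)
    (w : EuclideanSpace ℝ (Fin m)) :
    pushedProj m F t w = w + -(t • ((sA (gradient F w))⁻¹ • gradient F w)) := by
  have h : pushedProj m F t w = w + t • ((sA (gradient F w))⁻¹ • (-(gradient F w))) := by
    rw [pushedProj, pushedPt, graphPt, unitNormal, norm_preNormal, preNormal]
    rfl
  rw [h, smul_neg, smul_neg]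

lemma pushedPt_eq (m : ℕ) (F : EuclideanSpace ℝ (Fin m) → ℝ) (t : ℝ)
    (w : EuclideanSpace ℝ (Fin m)) :
    pushedPt m F t w = (WithLp.equiv 2 (EuclideanSpace ℝ (Fin m) × ℝ)).symm
      (pushedProj m F t w, F w + t * (sA (gradient F w))⁻¹) := by
  rw [pushedPt, graphPt, unitNormal, norm_preNormal, preNormal, pushedProj, pushedPt, graphPt,
    unitNormal, norm_preNormal, preNormal]
  apply (WithLp.equiv 2 _).injective
  ext
  · rfl
  · show F w + t * ((sA (gradient F w))⁻¹ * 1) = F w + t * (sA (gradient F w))⁻¹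
    rw [mul_one]


/-- If `F : P → ℝ` is smooth with `‖DF‖ ≤ λε` and `‖D²F‖ ≤ λε/r`, `ε` small, and
`ξ_+(w) = (w,F(w)) + 5C₀εr ν(w)`, then `ψ = π ∘ ξ_+` satisfies `|Dψ(w) − I| ≤ Cε`,
`ψ` is a bijection of `P` with `(1+Cε)`-Lipschitz inverse, and the pushed-off set
`G_+ = ξ_+(P)` is the graph over `P` of a `Cε`-Lipschitz function. -/
theorem stmt12 (m : ℕ) (lam C₀ : ℝ) (hlam : 0 < lam) (hC₀ : 1 ≤ C₀) :
    ∃ C : ℝ, 0 < C ∧ ∃ ε₀ : ℝ, 0 < ε₀ ∧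
      ∀ ε r : ℝ, 0 < ε → ε < ε₀ → 0 < r →
      ∀ F : EuclideanSpace ℝ (Fin m) → ℝ, ContDiff ℝ (⊤ : ℕ∞) F →
        (∀ w, ‖fderiv ℝ F w‖ ≤ lam * ε) →
        (∀ w, ‖iteratedFDeriv ℝ 2 F w‖ ≤ lam * ε / r) →
        (∀ w, ‖fderiv ℝ (pushedProj m F (5 * C₀ * ε * r)) w
            - ContinuousLinearMap.id ℝ (EuclideanSpace ℝ (Fin m))‖ ≤ C * ε)
        ∧ Function.Bijective (pushedProj m F (5 * C₀ * ε * r))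
        ∧ (∃ φ : EuclideanSpace ℝ (Fin m) → EuclideanSpace ℝ (Fin m),
            Function.LeftInverse φ (pushedProj m F (5 * C₀ * ε * r)) ∧
            Function.RightInverse φ (pushedProj m F (5 * C₀ * ε * r)) ∧
            LipschitzWith (Real.toNNReal (1 + C * ε)) φ)
        ∧ ∃ g : EuclideanSpace ℝ (Fin m) → ℝ,
            LipschitzWith (Real.toNNReal (C * ε)) g ∧
            {x | ∃ w, x = pushedPt m F (5 * C₀ * ε * r) w}
              = {x : WithLp 2 (EuclideanSpace ℝ (Fin m) × ℝ) |
                  ∃ u : EuclideanSpace ℝ (Fin m),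
                    x = (WithLp.equiv 2 (EuclideanSpace ℝ (Fin m) × ℝ)).symm (u, g u)} := by
  classical
  have hC₀' : 0 < C₀ := lt_of_lt_of_le one_pos hC₀
  refine ⟨2 * lam + 3, by positivity, min 1 (1 / (20 * C₀ * lam)), by positivity, ?_⟩
  intro ε r hε hεlt hr F hF hF1 hF2
  set C : ℝ := 2 * lam + 3 with hCdef
  set t : ℝ := 5 * C₀ * ε * r with htdef
  have hε1 : ε < 1 := lt_of_lt_of_le hεlt (min_le_left _ _)
  have hε2 : ε < 1 / (20 * C₀ * lam) := lt_of_lt_of_le hεlt (min_le_right _ _)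
  have hε2' : 20 * C₀ * lam * ε < 1 := by
    rw [lt_div_iff₀ (by positivity)] at hε2
    nlinarith
  have ht : 0 < t := by positivity
  set G := gradient F with hGdef
  -- differentiability of fderiv F
  have hdF : Differentiable ℝ (fderiv ℝ F) :=
    (hF.fderiv_right (m := (⊤ : ℕ∞)) (by simp)).differentiable (by simp)
  have hGpt : ∀ x, G x = (InnerProductSpace.toDual ℝ (EuclideanSpace ℝ (Fin m))).symm (fderiv ℝ F x) := fun x => rfl
  have hGsub : ∀ x y, ‖G x - G y‖ = ‖fderiv ℝ F x - fderiv ℝ F y‖ := by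
    intro x y
    rw [hGpt, hGpt, ← map_sub, LinearIsometryEquiv.norm_map]
  have hGnorm : ∀ w, ‖G w‖ ≤ lam * ε := by
    intro w
    rw [hGpt, LinearIsometryEquiv.norm_map]
    exact hF1 w
  have hGle1 : ∀ w, ‖G w‖ ≤ 1 := by
    intro w
    refine (hGnorm w).trans ?_
    nlinarith
  have hGdiff : Differentiable ℝ G := by
    have h1 : Differentiable ℝ
        (fun w => (InnerProductSpace.toDual ℝ (EuclideanSpace ℝ (Fin m))).symm (fderiv ℝ F w)) :=
      (InnerProductSpace.toDual ℝ (EuclideanSpace ℝ (Fin m))).symm.toContinuousLinearEquiv.differentiable.comp hdF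
    exact h1
  -- second derivative bound and Lipschitz gradient
  have hd2 : ∀ x, ‖fderiv ℝ (fderiv ℝ F) x‖ ≤ lam * ε / r := by
    intro x
    have e1 : ‖fderiv ℝ (fderiv ℝ F) x‖ = ‖iteratedFDeriv ℝ 2 F x‖ := by
      rw [← norm_iteratedFDeriv_zero (𝕜 := ℝ) (f := fderiv ℝ (fderiv ℝ F)) (x := x),
        norm_iteratedFDeriv_fderiv, norm_iteratedFDeriv_fderiv]
    rw [e1]; exact hF2 x
  have hdFlip : LipschitzWith (Real.toNNReal (lam * ε / r)) (fderiv ℝ F) :=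
    lipschitzWith_of_nnnorm_fderiv_le hdF (fun x => by
      rw [← NNReal.coe_le_coe, coe_nnnorm, Real.coe_toNNReal _ (by positivity)]
      exact hd2 x)
  have hGlip : ∀ x y, ‖G x - G y‖ ≤ lam * ε / r * ‖x - y‖ := by
    intro x y
    rw [hGsub]
    have h := hdFlip.dist_le_mul x y
    rwa [dist_eq_norm, dist_eq_norm, Real.coe_toNNReal _ (by positivity)] at h
  -- ψ = id + u
  set u : EuclideanSpace ℝ (Fin m) → EuclideanSpace ℝ (Fin m) := fun w => -(t • ((sA (G w))⁻¹ • G w)) with hudef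
  set ψ := pushedProj m F t with hψdef
  have hψw : ∀ w, ψ w = w + u w := fun w => pushedProj_eq m F t w
  have hulip : ∀ x y, ‖u x - u y‖ ≤ ε / 2 * ‖x - y‖ := by
    intro x y
    have hs : u x - u y = -(t • ((sA (G x))⁻¹ • G x - (sA (G y))⁻¹ • G y)) := by
      rw [hudef]; module
    rw [hs, norm_neg, norm_smul, Real.norm_eq_abs, abs_of_pos ht]
    calc t * ‖(sA (G x))⁻¹ • G x - (sA (G y))⁻¹ • G y‖
        ≤ t * (2 * ‖G x - G y‖) :=
          mul_le_mul_of_nonneg_left (N_lip (hGle1 x) (hGle1 y)) ht.le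
      _ ≤ t * (2 * (lam * ε / r * ‖x - y‖)) := by
          have := hGlip x y
          have h2 : 2 * ‖G x - G y‖ ≤ 2 * (lam * ε / r * ‖x - y‖) := by linarith
          exact mul_le_mul_of_nonneg_left h2 ht.le
      _ = 10 * C₀ * lam * ε ^ 2 * ‖x - y‖ := by
          rw [htdef]; field_simp; ring
      _ ≤ ε / 2 * ‖x - y‖ := by
          have hn : (0:ℝ) ≤ ‖x - y‖ := norm_nonneg _
          have hkey : 10 * C₀ * lam * ε ^ 2 ≤ ε / 2 := by
            nlinarith [mul_lt_mul_of_pos_right hε2' (half_pos hε)]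
          exact mul_le_mul_of_nonneg_right hkey hn
  have hulipW : LipschitzWith (Real.toNNReal (ε / 2)) u :=
    LipschitzWith.of_dist_le_mul (fun a b => by
      rw [Real.coe_toNNReal _ (by positivity), dist_eq_norm, dist_eq_norm]
      exact hulip a b)
  have hlow : ∀ x y, (1 - ε / 2) * ‖x - y‖ ≤ ‖ψ x - ψ y‖ := by
    intro x y
    have h1 : ψ x - ψ y = (x - y) + (u x - u y) := by rw [hψw, hψw]; abel
    have h2 : ‖x - y‖ ≤ ‖ψ x - ψ y‖ + ‖u x - u y‖ := by
      calc ‖x - y‖ = ‖(ψ x - ψ y) - (u x - u y)‖ := by rw [h1]; congr 1; abel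
        _ ≤ ‖ψ x - ψ y‖ + ‖u x - u y‖ := norm_sub_le _ _
    have h3 := hulip x y
    nlinarith [norm_nonneg (x - y)]
  have hhalf : (0:ℝ) < 1 - ε / 2 := by linarith
  have hinj : Function.Injective ψ := by
    intro x y hxy
    have h1 := hlow x y
    rw [hxy, sub_self, norm_zero] at h1
    have h2 : ‖x - y‖ ≤ 0 := by nlinarith [norm_nonneg (x - y)]
    rw [← sub_eq_zero]
    exact norm_le_zero_iff.mp h2
  have hsurj : Function.Surjective ψ := by
    intro y
    set T : EuclideanSpace ℝ (Fin m) → EuclideanSpace ℝ (Fin m) := fun x => y - u x with hTdef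
    have hTlip : LipschitzWith (Real.toNNReal (ε / 2)) T :=
      LipschitzWith.of_dist_le_mul (fun a b => by
        rw [Real.coe_toNNReal _ (by positivity), dist_eq_norm, dist_eq_norm]
        have : T a - T b = u b - u a := by rw [hTdef]; show y - u a - (y - u b) = u b - u a; abel
        rw [this]
        calc ‖u b - u a‖ ≤ ε / 2 * ‖b - a‖ := hulip b a
          _ = ε / 2 * ‖a - b‖ := by rw [norm_sub_rev])
    have hlt1 : Real.toNNReal (ε / 2) < 1 := by
      exact Real.toNNReal_lt_one.mpr (by linarith)
    have hcontr : ContractingWith (Real.toNNReal (ε / 2)) T := ⟨hlt1, hTlip⟩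
    obtain ⟨x, hx, -⟩ := hcontr.exists_fixedPoint y (edist_ne_top _ _)
    refine ⟨x, ?_⟩
    have hx' : y - u x = x := hx
    rw [hψw]
    exact (sub_eq_iff_eq_add.mp hx').symm
  have hbij : Function.Bijective ψ := ⟨hinj, hsurj⟩
  set φ : EuclideanSpace ℝ (Fin m) → EuclideanSpace ℝ (Fin m) := fun y => (hsurj y).choose with hφdef
  have hφr : ∀ y, ψ (φ y) = y := fun y => (hsurj y).choose_spec
  have hφl : Function.LeftInverse φ ψ := fun w => hinj (hφr (ψ w))
  have hφ2 : ∀ a b, ‖φ a - φ b‖ ≤ 2 * ‖a - b‖ := by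
    intro a b
    have h1 := hlow (φ a) (φ b)
    rw [hφr, hφr] at h1
    nlinarith [norm_nonneg (φ a - φ b), norm_nonneg (a - b)]
  have hφlip : LipschitzWith (Real.toNNReal (1 + C * ε)) φ :=
    LipschitzWith.of_dist_le_mul (fun a b => by
      rw [Real.coe_toNNReal _ (by positivity), dist_eq_norm, dist_eq_norm]
      have h1 := hlow (φ a) (φ b)
      rw [hφr, hφr] at h1
      have hεsq : ε ^ 2 ≤ ε := by nlinarith
      have hA : 1 ≤ (1 + C * ε) * (1 - ε / 2) := by
        rw [hCdef]
        nlinarith [mul_le_mul_of_nonneg_left hεsq (show (0:ℝ) ≤ 2 * lam + 3 by linarith)]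
      calc ‖φ a - φ b‖ = 1 * ‖φ a - φ b‖ := (one_mul _).symm
        _ ≤ ((1 + C * ε) * (1 - ε / 2)) * ‖φ a - φ b‖ :=
            mul_le_mul_of_nonneg_right hA (norm_nonneg _)
        _ = (1 + C * ε) * ((1 - ε / 2) * ‖φ a - φ b‖) := by ring
        _ ≤ (1 + C * ε) * ‖a - b‖ :=
            mul_le_mul_of_nonneg_left h1 (by positivity))
  -- claim 1 : fderiv bound
  have hu : Differentiable ℝ u := by
    have hsq : Differentiable ℝ (fun w => 1 + ‖G w‖ ^ 2) :=
      (differentiable_const _).add (hGdiff.norm_sq (𝕜 := ℝ))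
    have hsA : Differentiable ℝ (fun w => sA (G w)) := by
      simp only [sA]
      exact hsq.sqrt (fun x => by positivity)
    have hq : Differentiable ℝ (fun w => (sA (G w))⁻¹) := hsA.inv (fun x => sA_ne_zero _)
    exact ((hq.smul hGdiff).const_smul t).neg
  have claim1 : ∀ w, ‖fderiv ℝ ψ w - ContinuousLinearMap.id ℝ (EuclideanSpace ℝ (Fin m))‖ ≤ C * ε := by
    intro w
    have hψfun : ψ = fun w => w + u w := funext hψw
    have heq : fderiv ℝ ψ w = ContinuousLinearMap.id ℝ (EuclideanSpace ℝ (Fin m)) + fderiv ℝ u w := by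
      rw [hψfun, fderiv_fun_add (differentiableAt_fun_id) (hu w), fderiv_fun_id]
    rw [heq, add_sub_cancel_left]
    have h1 := norm_fderiv_le_of_lipschitz ℝ hulipW (x₀ := w)
    have h2 : (Real.toNNReal (ε / 2) : ℝ) = ε / 2 := Real.coe_toNNReal _ (by positivity)
    rw [h2] at h1
    nlinarith
  -- Lipschitz data for the graph function
  have hFlipW : LipschitzWith (Real.toNNReal (lam * ε)) F :=
    lipschitzWith_of_nnnorm_fderiv_le (hF.differentiable (by simp)) (fun x => by
      rw [← NNReal.coe_le_coe, coe_nnnorm, Real.coe_toNNReal _ (by positivity)]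
      exact hF1 x)
  have hFlip : ∀ x y, |F x - F y| ≤ lam * ε * ‖x - y‖ := by
    intro x y
    have h := hFlipW.dist_le_mul x y
    rwa [dist_eq_norm, dist_eq_norm, Real.coe_toNNReal _ (by positivity),
      Real.norm_eq_abs] at h
  set h : EuclideanSpace ℝ (Fin m) → ℝ := fun w => F w + t * (sA (G w))⁻¹ with hhdef
  have hhlip : ∀ x y, |h x - h y| ≤ (lam + 1) * ε * ‖x - y‖ := by
    intro x y
    have hs : h x - h y = (F x - F y) + t * ((sA (G x))⁻¹ - (sA (G y))⁻¹) := by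
      rw [hhdef]; ring
    rw [hs]
    have h1 := hFlip x y
    have h2 : |t * ((sA (G x))⁻¹ - (sA (G y))⁻¹)| ≤ t * (lam * ε / r * ‖x - y‖) := by
      rw [abs_mul, abs_of_pos ht]
      refine mul_le_mul_of_nonneg_left ?_ ht.le
      exact (inv_sA_sub_le (hGle1 x) (hGle1 y)).trans (hGlip x y)
    have h3 : t * (lam * ε / r * ‖x - y‖) = 5 * C₀ * lam * ε ^ 2 * ‖x - y‖ := by
      rw [htdef]; field_simp
    have h4 : 5 * C₀ * lam * ε ^ 2 * ‖x - y‖ ≤ ε * ‖x - y‖ := by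
      have hn : (0:ℝ) ≤ ‖x - y‖ := norm_nonneg _
      have hkey : 5 * C₀ * lam * ε ^ 2 ≤ ε := by
        nlinarith [mul_lt_mul_of_pos_right hε2' (half_pos hε)]
      exact mul_le_mul_of_nonneg_right hkey hn
    calc |F x - F y + t * ((sA (G x))⁻¹ - (sA (G y))⁻¹)|
        ≤ |F x - F y| + |t * ((sA (G x))⁻¹ - (sA (G y))⁻¹)| := abs_add_le _ _
      _ ≤ lam * ε * ‖x - y‖ + ε * ‖x - y‖ := by
          refine add_le_add h1 (h2.trans ?_)
          rw [h3]; exact h4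
      _ = (lam + 1) * ε * ‖x - y‖ := by ring
  have hglip : LipschitzWith (Real.toNNReal (C * ε)) (fun a => h (φ a)) :=
    LipschitzWith.of_dist_le_mul (fun a b => by
      rw [Real.coe_toNNReal _ (by positivity), Real.dist_eq, dist_eq_norm]
      calc |h (φ a) - h (φ b)| ≤ (lam + 1) * ε * ‖φ a - φ b‖ := hhlip _ _
        _ ≤ (lam + 1) * ε * (2 * ‖a - b‖) :=
            mul_le_mul_of_nonneg_left (hφ2 a b) (by positivity)
        _ ≤ C * ε * ‖a - b‖ := by
            rw [hCdef]; nlinarith [norm_nonneg (a - b)])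
  refine ⟨claim1, hbij, ⟨φ, hφl, hφr, hφlip⟩, ⟨fun a => h (φ a), hglip, ?_⟩⟩
  ext x
  simp only [mem_setOf_eq]
  constructor
  · rintro ⟨w, rfl⟩
    refine ⟨ψ w, ?_⟩
    rw [pushedPt_eq, hφl w]
  · rintro ⟨a, rfl⟩
    refine ⟨φ a, ?_⟩
    have h2 : pushedProj m F t (φ a) = a := hφr a
    rw [pushedPt_eq, h2]
end

section
/- With F: P → R a smooth λε-Lipschitz function on the hyperplane P = {x_n = 0}, graph G = {(w,F(w))}, upward unit normal ν(w) with |ν(w) − e_n| ≤ Cε, and G_+ = {(w,F(w)) + 5C_0εr ν(w) : w ∈ P}: for ε small enough (depending on n, λ, C_0), every ξ ∈ G_+ satisfies 4C_0εr ≤ dist(ξ, G) ≤ 5C_0εr. -/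
open Metric Set

section aux

variable {m : ℕ} {F : EuclideanSpace ℝ (Fin m) → ℝ}

lemma norm_fst_le_aux (x : WithLp 2 (EuclideanSpace ℝ (Fin m) × ℝ)) : ‖x.fst‖ ≤ ‖x‖ := by
  have h := WithLp.prod_norm_sq_eq_of_L2 x
  nlinarith [norm_nonneg x, norm_nonneg x.fst, norm_nonneg x.snd, sq_nonneg ‖x.snd‖]

lemma norm_snd_le_aux (x : WithLp 2 (EuclideanSpace ℝ (Fin m) × ℝ)) : ‖x.snd‖ ≤ ‖x‖ := by
  have h := WithLp.prod_norm_sq_eq_of_L2 x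
  nlinarith [norm_nonneg x, norm_nonneg x.fst, norm_nonneg x.snd, sq_nonneg ‖x.fst‖]

lemma preNormal_sq (w : EuclideanSpace ℝ (Fin m)) :
    ‖preNormal m F w‖ ^ 2 = ‖gradient F w‖ ^ 2 + 1 := by
  have h := WithLp.prod_norm_sq_eq_of_L2 (preNormal m F w)
  simpa [preNormal] using h

lemma one_le_norm_preNormal (w : EuclideanSpace ℝ (Fin m)) : 1 ≤ ‖preNormal m F w‖ := by
  have h := preNormal_sq (F := F) w
  nlinarith [norm_nonneg (preNormal m F w), sq_nonneg ‖gradient F w‖]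

lemma norm_unitNormal (w : EuclideanSpace ℝ (Fin m)) : ‖unitNormal m F w‖ = 1 := by
  have h1 := one_le_norm_preNormal (F := F) w
  have h0 : ‖preNormal m F w‖ ≠ 0 := by linarith
  rw [unitNormal, norm_smul, norm_inv, norm_norm, inv_mul_cancel₀ h0]

lemma arith_aux {δ L α t d : ℝ} (hδ0 : 0 < δ) (hL0 : 0 ≤ L) (hL10 : L ≤ 1 / 10)
    (hαge : (1 + L)⁻¹ ≤ α) (ht0 : 0 ≤ t)
    (hA : t - δ * L ≤ d) (hB : δ * α - L * t ≤ d) : (4 / 5) * δ ≤ d := by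
  by_cases hcase : (9 / 10) * δ ≤ t
  · nlinarith
  · push_neg at hcase
    have h3 : (10 : ℝ) / 11 ≤ (1 + L)⁻¹ := by
      have h := inv_anti₀ (by linarith : (0:ℝ) < 1 + L) (by linarith : 1 + L ≤ 11 / 10)
      norm_num at h
      linarith
    have h2 : δ * (10 / 11) ≤ δ * α := by nlinarith
    have h4 : L * t ≤ (1 / 10) * ((9 / 10) * δ) := by nlinarith
    nlinarith

end aux

set_option maxHeartbeats 1000000

/-- If `F` is smooth and `λε`-Lipschitz on the hyperplane `P = {x_n = 0} ≅ ℝ^{n-1}`, with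
graph `G`, upward unit normal `ν`, and `G_+ = {(w,F(w)) + 5C₀εr ν(w)}`, then for `ε` small
enough (depending on the dimension, `λ`, `C₀`), every `ξ ∈ G_+` satisfies
`4C₀εr ≤ dist(ξ, G) ≤ 5C₀εr`. -/
theorem stmt13 (m : ℕ) (lam C₀ : ℝ) (hlam : 0 < lam) (hC₀ : 1 ≤ C₀) :
    ∃ ε₀ : ℝ, 0 < ε₀ ∧
      ∀ ε r : ℝ, 0 < ε → ε < ε₀ → 0 < r →
      ∀ F : EuclideanSpace ℝ (Fin m) → ℝ, ContDiff ℝ (⊤ : ℕ∞) F →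
        LipschitzWith (Real.toNNReal (lam * ε)) F →
        ∀ ξ ∈ {x | ∃ w, x = graphPt m F w + (5 * C₀ * ε * r) • unitNormal m F w},
          4 * C₀ * ε * r ≤ Metric.infDist ξ {x | ∃ w, x = graphPt m F w} ∧
          Metric.infDist ξ {x | ∃ w, x = graphPt m F w} ≤ 5 * C₀ * ε * r := by
  refine ⟨(10 * lam)⁻¹, by positivity, ?_⟩
  intro ε r hε hεlt hr F hF hFlip ξ hξ
  obtain ⟨w, rfl⟩ := hξ
  set L : ℝ := lam * ε with hLdef
  have hL0 : 0 ≤ L := le_of_lt (by positivity)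
  have hL10 : L ≤ 1 / 10 := by
    have h := mul_lt_mul_of_pos_left hεlt hlam
    have h2 : lam * (10 * lam)⁻¹ = 1 / 10 := by field_simp
    rw [h2] at h
    rw [hLdef]; linarith
  set δ : ℝ := 5 * C₀ * ε * r with hδdef
  have hδ0 : 0 < δ := by positivity
  -- gradient bound
  have hgrad : ∀ v, ‖gradient F v‖ ≤ L := by
    intro v
    have h1 : ‖fderiv ℝ F v‖ ≤ (Real.toNNReal L : ℝ) := norm_fderiv_le_of_lipschitz ℝ hFlip
    have h2 : ‖gradient F v‖ = ‖fderiv ℝ F v‖ := by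
      rw [gradient]; exact LinearIsometryEquiv.norm_map _ _
    rw [h2]
    exact h1.trans (by rw [Real.coe_toNNReal _ hL0])
  -- normal data at w
  set g : EuclideanSpace ℝ (Fin m) := gradient F w with hgdef
  set N : ℝ := ‖preNormal m F w‖ with hNdef
  have hN1 : 1 ≤ N := one_le_norm_preNormal w
  have hN0 : N ≠ 0 := by linarith
  have hNsq : N ^ 2 = ‖g‖ ^ 2 + 1 := preNormal_sq w
  have hNle : N ≤ 1 + L := by nlinarith [hgrad w, norm_nonneg g]
  set α : ℝ := N⁻¹ with hαdef
  have hα0 : 0 < α := by positivity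
  have hαle : α ≤ 1 := by rw [hαdef]; exact inv_le_one_of_one_le₀ hN1
  have hαge : (1 + L)⁻¹ ≤ α := by
    rw [hαdef]
    exact inv_anti₀ (by linarith) hNle
  have hαN : α * N = 1 := inv_mul_cancel₀ hN0
  -- the set is nonempty
  have hne : ({x | ∃ w, x = graphPt m F w} : Set (WithLp 2 (EuclideanSpace ℝ (Fin m) × ℝ))).Nonempty :=
    ⟨graphPt m F w, w, rfl⟩
  set ξ := graphPt m F w + δ • unitNormal m F w with hξdef
  -- distance from ξ to the base graph point
  have hdw : dist ξ (graphPt m F w) = δ := by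
    rw [dist_eq_norm, hξdef, add_sub_cancel_left, norm_smul, norm_unitNormal,
      Real.norm_eq_abs, abs_of_pos hδ0, mul_one]
  constructor
  · -- lower bound
    rw [Metric.infDist_eq_iInf]
    have : Nonempty ({x | ∃ w, x = graphPt m F w} : Set (WithLp 2 (EuclideanSpace ℝ (Fin m) × ℝ))) :=
      hne.to_subtype
    refine le_ciInf ?_
    rintro ⟨y, w', rfl⟩
    -- components of ξ - graphPt w'
    set t : ℝ := ‖w - w'‖ with htdef
    have ht0 : 0 ≤ t := norm_nonneg _
    have hFlip' : |F w - F w'| ≤ L * t := by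
      have := hFlip.dist_le_mul w w'
      rw [Real.dist_eq] at this
      refine this.trans ?_
      rw [Real.coe_toNNReal _ hL0]
      have : dist w w' = t := by rw [dist_eq_norm]
      rw [this]
    -- first component
    have hufst : (unitNormal m F w).fst = α • (-(gradient F w)) := rfl
    have husnd : (unitNormal m F w).snd = α := by
      show ‖preNormal m F w‖⁻¹ • (1:ℝ) = α
      rw [smul_eq_mul, mul_one, hαdef, hNdef]
    have hfst : (ξ - graphPt m F w').fst = (w - w') - (δ * α) • g := by
      have h : (ξ - graphPt m F w').fst = w + δ • (unitNormal m F w).fst - w' := rfl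
      rw [h, hufst, hgdef]
      module
    have hsnd : (ξ - graphPt m F w').snd = F w - F w' + δ * α := by
      have h : (ξ - graphPt m F w').snd = F w + δ • (unitNormal m F w).snd - F w' := rfl
      rw [h, husnd, smul_eq_mul]
      ring
    have hA : t - δ * L ≤ ‖(ξ - graphPt m F w').fst‖ := by
      rw [hfst]
      have h1 : ‖(δ * α) • g‖ ≤ δ * L := by
        rw [norm_smul, Real.norm_eq_abs, abs_of_pos (by positivity)]
        calc δ * α * ‖g‖ ≤ δ * 1 * L := by
              apply mul_le_mul (by nlinarith) (hgrad w) (norm_nonneg g) (by positivity)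
          _ = δ * L := by ring
      calc t - δ * L ≤ ‖w - w'‖ - ‖(δ * α) • g‖ := by rw [← htdef]; linarith
        _ ≤ ‖(w - w') - (δ * α) • g‖ := by
              have := norm_sub_norm_le (w - w') ((δ * α) • g)
              linarith
    have hB : δ * α - L * t ≤ (ξ - graphPt m F w').snd := by
      rw [hsnd]
      have := abs_le.mp hFlip'
      linarith [this.1]
    have hdA : ‖(ξ - graphPt m F w').fst‖ ≤ dist ξ (graphPt m F w') := by
      rw [dist_eq_norm]; exact norm_fst_le_aux _
    have hdB : (ξ - graphPt m F w').snd ≤ dist ξ (graphPt m F w') := by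
      rw [dist_eq_norm]
      exact (le_abs_self _).trans ((Real.norm_eq_abs _ ▸ norm_snd_le_aux _))
    have hgoal : 4 * C₀ * ε * r = (4 / 5) * δ := by rw [hδdef]; ring
    rw [hgoal]
    exact arith_aux hδ0 hL0 hL10 hαge ht0 (le_trans hA hdA) (le_trans hB hdB)
  · -- upper bound
    have hmem : graphPt m F w ∈ {x | ∃ w', x = graphPt m F w'} := ⟨w, rfl⟩
    have := Metric.infDist_le_dist_of_mem (x := ξ) hmem
    rw [hdw] at this
    calc Metric.infDist ξ {x | ∃ w, x = graphPt m F w} ≤ δ := this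
      _ = 5 * C₀ * ε * r := by rw [hδdef]
end

section
/- Let E ⊂ R^n be compact, and suppose that for every r > 0 small enough there exist two disjoint open connected sets W_{r,1}, W_{r,2} ⊂ R^n \ E such that {x : dist(x,E) > cεr} ⊂ W_{r,1} ∪ W_{r,2} and W_{r,1}, W_{r,2} lie in different connected components of R^n \ E. Then R^n \ E has exactly two connected components. -/
open Metric Set

/-- If `E ⊂ ℝⁿ` is compact and for every small enough `r > 0` there are two disjoint open
connected sets `W₁, W₂ ⊆ ℝⁿ \ E` such that `{x : dist(x,E) > cεr} ⊆ W₁ ∪ W₂` and no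
connected subset of `ℝⁿ \ E` meets both `W₁` and `W₂` (they lie in different components),
then `ℝⁿ \ E` has exactly two connected components. -/
theorem stmt17 (n : ℕ) (E : Set (EuclideanSpace ℝ (Fin n))) (hE : IsCompact E)
    (c ε : ℝ) (hc : 0 < c) (hε : 0 < ε)
    (r₁ : ℝ) (hr₁ : 0 < r₁)
    (hyp : ∀ r : ℝ, 0 < r → r < r₁ →
      ∃ W₁ W₂ : Set (EuclideanSpace ℝ (Fin n)),
        IsOpen W₁ ∧ IsOpen W₂ ∧ IsConnected W₁ ∧ IsConnected W₂ ∧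
        Disjoint W₁ W₂ ∧ W₁ ⊆ Eᶜ ∧ W₂ ⊆ Eᶜ ∧
        {x | c * ε * r < Metric.infDist x E} ⊆ W₁ ∪ W₂ ∧
        ∀ C : Set (EuclideanSpace ℝ (Fin n)), C ⊆ Eᶜ → IsPreconnected C →
          ¬((C ∩ W₁).Nonempty ∧ (C ∩ W₂).Nonempty)) :
    ∃ U₁ U₂ : Set (EuclideanSpace ℝ (Fin n)),
      IsOpen U₁ ∧ IsOpen U₂ ∧ IsConnected U₁ ∧ IsConnected U₂ ∧
      Disjoint U₁ U₂ ∧ U₁ ∪ U₂ = Eᶜ := by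
  have hEc : IsClosed E := hE.isClosed
  obtain ⟨W₁, W₂, hW₁o, hW₂o, hW₁c, hW₂c, hdisj, hW₁E, hW₂E, hcov, hsep⟩ :=
    hyp (r₁ / 2) (by linarith) (by linarith)
  -- E must be nonempty, otherwise univ is a connected set meeting both W₁ and W₂
  rcases E.eq_empty_or_nonempty with hEe | hEne
  · exfalso
    apply hsep univ (by simp [hEe]) isPreconnected_univ
    refine ⟨?_, ?_⟩ <;> simp [hW₁c.nonempty, hW₂c.nonempty]
  obtain ⟨x₁, hx₁⟩ := hW₁c.nonempty
  obtain ⟨x₂, hx₂⟩ := hW₂c.nonempty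
  have hx₁E : x₁ ∈ Eᶜ := hW₁E hx₁
  have hx₂E : x₂ ∈ Eᶜ := hW₂E hx₂
  have hd₁ : 0 < infDist x₁ E := (hEc.notMem_iff_infDist_pos hEne).mp hx₁E
  have hd₂ : 0 < infDist x₂ E := (hEc.notMem_iff_infDist_pos hEne).mp hx₂E
  set U₁ := connectedComponentIn Eᶜ x₁ with hU₁
  set U₂ := connectedComponentIn Eᶜ x₂ with hU₂
  have hU₁E : U₁ ⊆ Eᶜ := connectedComponentIn_subset _ _
  have hU₂E : U₂ ⊆ Eᶜ := connectedComponentIn_subset _ _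
  have hU₁c : IsConnected U₁ := (isConnected_connectedComponentIn_iff).mpr hx₁E
  have hU₂c : IsConnected U₂ := (isConnected_connectedComponentIn_iff).mpr hx₂E
  have hW₁U₁ : W₁ ⊆ U₁ := hW₁c.isPreconnected.subset_connectedComponentIn hx₁ hW₁E
  have hW₂U₂ : W₂ ⊆ U₂ := hW₂c.isPreconnected.subset_connectedComponentIn hx₂ hW₂E
  refine ⟨U₁, U₂, hEc.isOpen_compl.connectedComponentIn, hEc.isOpen_compl.connectedComponentIn,
    hU₁c, hU₂c, ?_, ?_⟩
  · -- disjointness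
    rw [Set.disjoint_left]
    intro a ha₁ ha₂
    have : U₁ = U₂ := by
      rw [hU₁, hU₂, connectedComponentIn_eq ha₁, connectedComponentIn_eq ha₂]
    apply hsep U₁ hU₁E hU₁c.isPreconnected
    exact ⟨⟨x₁, mem_connectedComponentIn hx₁E, hx₁⟩, ⟨x₂, this ▸ mem_connectedComponentIn hx₂E, hx₂⟩⟩
  · apply Subset.antisymm (union_subset hU₁E hU₂E)
    intro y hy
    have hdy : 0 < infDist y E := (hEc.notMem_iff_infDist_pos hEne).mp hy
    -- choose a small r
    set m := min (infDist y E) (min (infDist x₁ E) (infDist x₂ E)) with hm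
    have hm0 : 0 < m := by positivity
    set r := min (r₁ / 2) (m / (2 * (c * ε))) with hr
    have hr0 : 0 < r := by positivity
    have hrr₁ : r < r₁ := lt_of_le_of_lt (min_le_left _ _) (by linarith)
    have hcer : c * ε * r < m := by
      have h1 : c * ε * r ≤ c * ε * (m / (2 * (c * ε))) := by
        apply mul_le_mul_of_nonneg_left (min_le_right _ _) (by positivity)
      have h2 : c * ε * (m / (2 * (c * ε))) = m / 2 := by
        field_simp
      linarith
    obtain ⟨V₁, V₂, hV₁o, hV₂o, hV₁c, hV₂c, hVdisj, hV₁E, hV₂E, hVcov, hVsep⟩ :=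
      hyp r hr0 hrr₁
    have hyV : y ∈ V₁ ∪ V₂ := hVcov (lt_of_lt_of_le hcer (min_le_left _ _))
    have hx₁V : x₁ ∈ V₁ ∪ V₂ := hVcov (lt_of_lt_of_le hcer
      (le_trans (min_le_right _ _) (min_le_left _ _)))
    have hx₂V : x₂ ∈ V₁ ∪ V₂ := hVcov (lt_of_lt_of_le hcer
      (le_trans (min_le_right _ _) (min_le_right _ _)))
    -- x₁ and x₂ cannot be in the same Vᵢ
    have key : ∀ V : Set (EuclideanSpace ℝ (Fin n)), V ⊆ Eᶜ → IsPreconnected V →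
        ¬(x₁ ∈ V ∧ x₂ ∈ V) := by
      rintro V hVE hVp ⟨h1, h2⟩
      exact hsep V hVE hVp ⟨⟨x₁, h1, hx₁⟩, ⟨x₂, h2, hx₂⟩⟩
    -- a connected V ⊆ Eᶜ containing y and x₁ puts y in U₁, etc.
    have put : ∀ (V : Set (EuclideanSpace ℝ (Fin n))) (x : EuclideanSpace ℝ (Fin n)),
        V ⊆ Eᶜ → IsPreconnected V → x ∈ V → y ∈ V →
        y ∈ connectedComponentIn Eᶜ x := fun V x hVE hVp hxV hyV =>
      (hVp.subset_connectedComponentIn hxV hVE) hyV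
    rcases hyV with hy1 | hy2
    · rcases hx₁V with h1 | h1
      · exact Or.inl (put V₁ x₁ hV₁E hV₁c.isPreconnected h1 hy1)
      · rcases hx₂V with h2 | h2
        · exact Or.inr (put V₁ x₂ hV₁E hV₁c.isPreconnected h2 hy1)
        · exact absurd ⟨h1, h2⟩ (key V₂ hV₂E hV₂c.isPreconnected)
    · rcases hx₂V with h2 | h2
      · rcases hx₁V with h1 | h1
        · exact absurd ⟨h1, h2⟩ (key V₁ hV₁E hV₁c.isPreconnected)
        · exact Or.inl (put V₂ x₁ hV₂E hV₂c.isPreconnected h1 hy2)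
      · exact Or.inr (put V₂ x₂ hV₂E hV₂c.isPreconnected h2 hy2)
end

section
/- Let P be a d-plane through x in R^n and v a unit vector orthogonal to the direction of P. If Q is a d-plane with d_{x,1/4}(P,Q) ≤ 10ε and ε small, then the orthogonal projection of v onto the direction space of Q has norm at most 75ε. -/
open Metric Set

/-- If `P` is a `d`-plane through `x`, `v` a unit vector orthogonal to the direction of `P`,
and `Q` a `d`-plane with `d_{x,1/4}(P,Q) ≤ 10 ε` and `ε` small, then the orthogonal
projection of `v` onto the direction of `Q` has norm at most `75 ε`. -/
theorem stmt19 (n d : ℕ) (hd : 0 < d) (hdn : d < n) (ε : ℝ) (hε : 0 < ε)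
    (hεsmall : ε ≤ 1 / 100)
    (x : EuclideanSpace ℝ (Fin n))
    (P Q : AffineSubspace ℝ (EuclideanSpace ℝ (Fin n)))
    (hrankP : Module.finrank ℝ P.direction = d)
    (hrankQ : Module.finrank ℝ Q.direction = d)
    (hxP : x ∈ P)
    (v : EuclideanSpace ℝ (Fin n)) (hv : v ∈ P.directionᗮ) (hv1 : ‖v‖ = 1)
    (hclose : locDist x (1 / 4) (P : Set (EuclideanSpace ℝ (Fin n)))
      (Q : Set (EuclideanSpace ℝ (Fin n))) ≤ 10 * ε) :
    ‖(Submodule.orthogonalProjectionOnto Q.direction v : EuclideanSpace ℝ (Fin n))‖ ≤ 75 * ε := by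
  classical
  set w : EuclideanSpace ℝ (Fin n) :=
    (Submodule.orthogonalProjectionOnto Q.direction v : EuclideanSpace ℝ (Fin n)) with hw
  set t : ℝ := ‖w‖ with ht
  -- Q is nonempty
  have hQne : (Q : Set (EuclideanSpace ℝ (Fin n))).Nonempty := by
    rcases (Q : Set (EuclideanSpace ℝ (Fin n))).eq_empty_or_nonempty with h | h
    · exfalso
      have hbot : Q = ⊥ := Q.coe_eq_bot_iff.mp h
      rw [hbot, AffineSubspace.direction_bot] at hrankQ
      simp at hrankQ
      omega
    · exact h
  have hPne : (P : Set (EuclideanSpace ℝ (Fin n))).Nonempty := ⟨x, hxP⟩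
  have hQclosed : IsClosed (Q : Set (EuclideanSpace ℝ (Fin n))) :=
    Q.closed_of_finiteDimensional
  have hPclosed : IsClosed (P : Set (EuclideanSpace ℝ (Fin n))) :=
    P.closed_of_finiteDimensional
  obtain ⟨q₁, hq₁⟩ := hQne
  set S : Set ℝ := (fun y => Metric.infDist y (Q : Set (EuclideanSpace ℝ (Fin n)))) ''
    ((P : Set (EuclideanSpace ℝ (Fin n))) ∩ Metric.closedBall x (1 / 4)) with hS
  set T : Set ℝ := (fun y => Metric.infDist y (P : Set (EuclideanSpace ℝ (Fin n)))) ''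
    ((Q : Set (EuclideanSpace ℝ (Fin n))) ∩ Metric.closedBall x (1 / 4)) with hT
  have hSbdd : BddAbove S := by
    refine ⟨1 / 4 + dist x q₁, ?_⟩
    rintro s ⟨y, ⟨-, hy2⟩, rfl⟩
    calc Metric.infDist y (Q : Set (EuclideanSpace ℝ (Fin n))) ≤ dist y q₁ :=
          Metric.infDist_le_dist_of_mem hq₁
      _ ≤ dist y x + dist x q₁ := dist_triangle _ _ _
      _ ≤ 1 / 4 + dist x q₁ := by
          have := Metric.mem_closedBall.mp hy2; linarith
  have hTbdd : BddAbove T := by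
    refine ⟨1 / 4, ?_⟩
    rintro s ⟨y, ⟨-, hy2⟩, rfl⟩
    calc Metric.infDist y (P : Set (EuclideanSpace ℝ (Fin n))) ≤ dist y x :=
          Metric.infDist_le_dist_of_mem hxP
      _ ≤ 1 / 4 := Metric.mem_closedBall.mp hy2
  have hSnonneg : 0 ≤ sSup S := by
    apply Real.sSup_nonneg
    rintro s ⟨y, -, rfl⟩; exact Metric.infDist_nonneg
  have hTnonneg : 0 ≤ sSup T := by
    apply Real.sSup_nonneg
    rintro s ⟨y, -, rfl⟩; exact Metric.infDist_nonneg
  have hloc : (1 / 4 : ℝ)⁻¹ * sSup S + (1 / 4 : ℝ)⁻¹ * sSup T ≤ 10 * ε := hclose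
  have hSsup : sSup S ≤ 5 / 2 * ε := by
    rw [show ((1:ℝ)/4)⁻¹ = 4 by norm_num] at hloc; linarith
  have hTsup : sSup T ≤ 5 / 2 * ε := by
    rw [show ((1:ℝ)/4)⁻¹ = 4 by norm_num] at hloc; linarith
  have hxball : x ∈ Metric.closedBall x (1 / 4) :=
    Metric.mem_closedBall_self (by norm_num)
  have hinfxQ : Metric.infDist x (Q : Set (EuclideanSpace ℝ (Fin n))) ≤ 5 / 2 * ε :=
    le_trans (le_csSup hSbdd ⟨x, ⟨hxP, hxball⟩, rfl⟩) hSsup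
  obtain ⟨q₀, hq₀Q, hq₀d⟩ := hQclosed.exists_infDist_eq_dist ⟨q₁, hq₁⟩ x
  have hxq₀ : dist x q₀ ≤ 5 / 2 * ε := hq₀d ▸ hinfxQ
  have hq₀x : dist q₀ x ≤ 5 / 2 * ε := by rw [dist_comm]; exact hxq₀
  rcases eq_or_lt_of_le (norm_nonneg w) with h0 | h0
  · have h0' : t = 0 := by rw [ht, ← h0]
    rw [h0']; positivity
  have h0t : 0 < t := ht ▸ h0
  have htne : t ≠ 0 := ne_of_gt h0t
  set y : EuclideanSpace ℝ (Fin n) := q₀ + (8 * t)⁻¹ • w with hy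
  have hwQ : w ∈ Q.direction := (Submodule.orthogonalProjectionOnto Q.direction v).2
  have hyQ : y ∈ Q := by
    have : (8 * t)⁻¹ • w +ᵥ q₀ ∈ Q :=
      AffineSubspace.vadd_mem_of_mem_direction (Submodule.smul_mem _ _ hwQ) hq₀Q
    simpa [hy, add_comm] using this
  have hdyq₀ : dist y q₀ = 1 / 8 := by
    rw [hy, dist_self_add_left, norm_smul, norm_inv, Real.norm_eq_abs,
      abs_of_pos (by positivity : (0:ℝ) < 8 * t), ← ht]
    field_simp
  have hyball : y ∈ Metric.closedBall x (1 / 4) := by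
    rw [Metric.mem_closedBall]
    calc dist y x ≤ dist y q₀ + dist q₀ x := dist_triangle _ _ _
      _ ≤ 1 / 8 + 5 / 2 * ε := by rw [hdyq₀]; linarith
      _ ≤ 1 / 4 := by linarith
  have hinfyP : Metric.infDist y (P : Set (EuclideanSpace ℝ (Fin n))) ≤ 5 / 2 * ε :=
    le_trans (le_csSup hTbdd ⟨y, ⟨hyQ, hyball⟩, rfl⟩) hTsup
  obtain ⟨p, hpP, hpd⟩ := hPclosed.exists_infDist_eq_dist hPne y
  have hyp : dist y p ≤ 5 / 2 * ε := hpd ▸ hinfyP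
  have hvw : @inner ℝ _ _ v w = t ^ 2 := by
    have h1 := Submodule.starProjection_inner_eq_zero (K := Q.direction) v w hwQ
    have h2 : @inner ℝ _ _ v w - @inner ℝ _ _ w w = 0 := by
      rw [← inner_sub_left]; exact h1
    have h3 : @inner ℝ _ _ w w = t ^ 2 := by rw [real_inner_self_eq_norm_sq, ht]
    linarith
  have hvpx : @inner ℝ _ _ v (p - x) = 0 := by
    have hmem : p - x ∈ P.direction := by
      simpa using AffineSubspace.vsub_mem_direction hpP hxP
    have := (Submodule.mem_orthogonal _ v).mp hv (p - x) hmem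
    rw [real_inner_comm] at this
    exact this
  have key : t / 8 = @inner ℝ _ _ v (y - p) - @inner ℝ _ _ v (q₀ - x) := by
    have expand : y - p = (q₀ - x) + (8 * t)⁻¹ • w + (x - p) := by rw [hy]; abel
    rw [expand, inner_add_right, inner_add_right, inner_smul_right, hvw]
    have h4 : @inner ℝ _ _ v (x - p) = - @inner ℝ _ _ v (p - x) := by
      rw [← inner_neg_right]; congr 1; abel
    have h5 : (8 * t)⁻¹ * t ^ 2 = t / 8 := by field_simp
    rw [h4, hvpx, h5]; ring
  have hb1 : @inner ℝ _ _ v (y - p) ≤ 5 / 2 * ε := by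
    calc @inner ℝ _ _ v (y - p) ≤ ‖v‖ * ‖y - p‖ := real_inner_le_norm _ _
      _ = ‖y - p‖ := by rw [hv1, one_mul]
      _ = dist y p := (dist_eq_norm _ _).symm
      _ ≤ 5 / 2 * ε := hyp
  have hb2 : -(@inner ℝ _ _ v (q₀ - x)) ≤ 5 / 2 * ε := by
    calc -(@inner ℝ _ _ v (q₀ - x)) ≤ ‖v‖ * ‖q₀ - x‖ := by
          rw [← inner_neg_right]
          exact le_trans (real_inner_le_norm _ _) (by rw [norm_neg])
      _ = ‖q₀ - x‖ := by rw [hv1, one_mul]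
      _ = dist q₀ x := (dist_eq_norm _ _).symm
      _ ≤ 5 / 2 * ε := hq₀x
  have hfin : t / 8 ≤ 5 * ε := by rw [key]; linarith
  linarith
end
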